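/- arXiv:2508.13883 — 5 statements merged into one kernel-verified Lean document; each statement's English description precedes it below -/
import Mathlib

section
/- The XXZ R-matrix satisfies the crossing relation: the partial transpose of R(−v) on the second factor equals (sinh(v)/sinh(v−η)) · (σ^y ⊗ 1) R(v−η) (σ^y ⊗ 1), where the partial transpose is taken in the second tensor factor and σ^y acts on the first factor. Equivalently in index form, R_{k,0}^{t_k}(−v) = (sinh(v)/sinh(v−η)) σ^y_k R_{0,k}(v−η) σ^y_k. -/
/-- The XXZ R-matrix on `ℂ² ⊗ ℂ²`. -/
noncomputable def Rxxz (η u : ℂ) : Matrix (Fin 2 × Fin 2) (Fin 2 × Fin 2) ℂ :=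
  Matrix.of fun p q =>
    if p = q then
      (if p.1 = p.2 then 1 else Complex.sinh u / Complex.sinh (u + η))
    else if p.1 = q.2 ∧ p.2 = q.1 ∧ p.1 ≠ p.2 then
      Complex.sinh η / Complex.sinh (u + η)
    else 0

/-- Pauli matrix σ^y. -/
noncomputable def sigmaY : Matrix (Fin 2) (Fin 2) ℂ :=
  !![0, -Complex.I; Complex.I, 0]

/-- σ^y acting on the first tensor factor of `ℂ² ⊗ ℂ²`. -/
noncomputable def sigmaY1 : Matrix (Fin 2 × Fin 2) (Fin 2 × Fin 2) ℂ :=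
  Matrix.of fun p q => sigmaY p.1 q.1 * (if p.2 = q.2 then 1 else 0)

/-- Partial transpose in the second tensor factor. -/
def ptranspose2 (M : Matrix (Fin 2 × Fin 2) (Fin 2 × Fin 2) ℂ) :
    Matrix (Fin 2 × Fin 2) (Fin 2 × Fin 2) ℂ :=
  Matrix.of fun p q => M (p.1, q.2) (q.1, p.2)

/-!
Both sides are symmetric eight-vertex matrices. The partial transpose `t₂` exchanges the weights
`c` and `d`, while conjugation by `σ^y ⊗ 1` exchanges `a` and `b` and negates `c` and `d`
(since `σ^y` squares to one and `σ^y_{01} σ^y_{01} = σ^y_{10} σ^y_{10} = -1`). The crossing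
relation thus reduces to the scalar identities `b(-v) = sinh v / sinh (v - η)` and
`c(-v) = -sinh η / sinh (v - η)`, i.e. to `sinh` being odd.
-/

/-- The symmetric eight-vertex matrix: weight `a` on `|ii⟩⟨ii|`, `b` on `|ij⟩⟨ij|`, `c` on
`|ij⟩⟨ji|` and `d` on `|ii⟩⟨jj|`, for `i ≠ j`. -/
def eightVertex {R : Type*} [Zero R] (a b c d : R) : Matrix (Fin 2 × Fin 2) (Fin 2 × Fin 2) R :=
  Matrix.of fun p q =>
    if p = q then (if p.1 = p.2 then a else b)
    else if p.1 = q.2 ∧ p.2 = q.1 then c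
    else if p.1 = p.2 ∧ q.1 = q.2 then d
    else 0

theorem smul_eightVertex {R : Type*} [MulZeroClass R] (k a b c d : R) :
    k • eightVertex a b c d = eightVertex (k * a) (k * b) (k * c) (k * d) := by
  ext ⟨i, j⟩ ⟨i', j'⟩
  fin_cases i <;> fin_cases j <;> fin_cases i' <;> fin_cases j' <;> simp [eightVertex]

theorem Rxxz_eq_eightVertex (η u : ℂ) :
    Rxxz η u = eightVertex 1 (Complex.sinh u / Complex.sinh (u + η))
      (Complex.sinh η / Complex.sinh (u + η)) 0 := by
  ext ⟨i, j⟩ ⟨k, l⟩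
  fin_cases i <;> fin_cases j <;> fin_cases k <;> fin_cases l <;> simp [Rxxz, eightVertex]

theorem ptranspose2_eightVertex (a b c d : ℂ) :
    ptranspose2 (eightVertex a b c d) = eightVertex a b d c := by
  ext ⟨i, j⟩ ⟨k, l⟩
  fin_cases i <;> fin_cases j <;> fin_cases k <;> fin_cases l <;> simp [ptranspose2, eightVertex]

theorem sigmaY1_mul_eightVertex_mul_sigmaY1 (a b c d : ℂ) :
    sigmaY1 * eightVertex a b c d * sigmaY1 = eightVertex b a (-d) (-c) := by
  have I_mul_mul_I (x : ℂ) : Complex.I * x * Complex.I = -x := by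
    rw [mul_right_comm, Complex.I_mul_I, neg_one_mul]
  ext ⟨i, j⟩ ⟨k, l⟩
  fin_cases i <;> fin_cases j <;> fin_cases k <;> fin_cases l <;>
    simp [sigmaY1, sigmaY, eightVertex, Matrix.mul_apply, Fintype.sum_prod_type, I_mul_mul_I]

theorem crossing_general (η v : ℂ)
    (h2 : Complex.sinh (v - η) ≠ 0)
    (h3 : Complex.sinh v ≠ 0) :
    ptranspose2 (Rxxz η (-v)) =
      (Complex.sinh v / Complex.sinh (v - η)) •
        (sigmaY1 * Rxxz η (v - η) * sigmaY1) := by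
  have sinh_neg_sub : Complex.sinh (-v + η) = -Complex.sinh (v - η) := by
    rw [← Complex.sinh_neg, neg_sub, neg_add_eq_sub]
  rw [Rxxz_eq_eightVertex, Rxxz_eq_eightVertex, ptranspose2_eightVertex,
    sigmaY1_mul_eightVertex_mul_sigmaY1, smul_eightVertex, sub_add_cancel, sinh_neg_sub,
    Complex.sinh_neg, neg_zero, mul_zero]
  congr 1 <;> field_simp

/-- Crossing relation for the XXZ R-matrix:
`R(-v)^{t₂} = (sinh v / sinh (v-η)) (σ^y ⊗ 1) R(v-η) (σ^y ⊗ 1)`. -/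
theorem crossing (η v : ℂ)
    (h1 : Complex.sinh (-v + η) ≠ 0)
    (h2 : Complex.sinh (v - η) ≠ 0)
    (h3 : Complex.sinh v ≠ 0) :
    ptranspose2 (Rxxz η (-v)) =
      (Complex.sinh v / Complex.sinh (v - η)) •
        (sigmaY1 * Rxxz η (v - η) * sigmaY1) :=
  crossing_general η v h2 h3
end

section
/- Let λ be an eigenvalue of a complex n×n matrix A with algebraic multiplicity m. With A(x) = adj(xI − A) and A_k(x) = (1/k!) A^{(k)}(x), the image of A_{m−1}(λ) equals the generalized eigenspace (root subspace) of A for eigenvalue λ. -/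
open Polynomial

/-- The matrix-valued polynomial `A(x) = adj(x·I - A)`. -/
noncomputable def adjPoly {n : ℕ} (A : Matrix (Fin n) (Fin n) ℂ) :
    Matrix (Fin n) (Fin n) ℂ[X] :=
  ((X : ℂ[X]) • (1 : Matrix (Fin n) (Fin n) ℂ[X]) - A.map C).adjugate

/-- `A_k(λ)`, the `k`-th Taylor coefficient of `A(x) = adj(xI - A)` at `x = λ`. -/
noncomputable def adjTaylorCoeff {n : ℕ} (A : Matrix (Fin n) (Fin n) ℂ)
    (lam : ℂ) (k : ℕ) : Matrix (Fin n) (Fin n) ℂ :=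
  Matrix.of fun i j => ((Polynomial.taylor lam) (adjPoly A i j)).coeff k

/-- If `λ` is an eigenvalue of `A` of algebraic multiplicity `m`, the image of
`A_{m-1}(λ)` equals the generalized eigenspace of `A` for `λ`. -/
theorem range_adjTaylorCoeff_eq_genEigenspace (n : ℕ)
    (A : Matrix (Fin n) (Fin n) ℂ) (lam : ℂ) (m : ℕ)
    (hm : A.charpoly.rootMultiplicity lam = m) (hm1 : 1 ≤ m) :
    LinearMap.range (Matrix.mulVecLin (adjTaylorCoeff A lam (m - 1))) =
      LinearMap.ker (Matrix.mulVecLin ((A - lam • 1) ^ n)) := by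
  classical
  have hcp0 : A.charpoly ≠ 0 := A.charpoly_monic.ne_zero
  set N : Matrix (Fin n) (Fin n) ℂ := A - lam • 1 with hN
  set q : ℂ[X] := A.charpoly /ₘ (X - C lam) ^ m with hq
  have hfac : (X - C lam) ^ m * q = A.charpoly := by
    rw [hq, ← hm]; exact Polynomial.pow_mul_divByMonic_rootMultiplicity_eq _ _
  have hqlam : q.eval lam ≠ 0 := by
    rw [hq, ← hm]; exact Polynomial.eval_divByMonic_pow_rootMultiplicity_ne_zero lam hcp0
  set c : ℂ[X] := taylor lam A.charpoly with hc
  set u : ℂ[X] := taylor lam q with hu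
  have htX : taylor lam ((X - C lam) ^ m) = X ^ m := by
    have h := map_pow (taylorAlgHom lam) (X - C lam) m
    simpa using h
  have hcu : c = X ^ m * u := by
    rw [hc, hu, ← hfac, taylor_mul, htX]
  have hu0 : u.coeff 0 ≠ 0 := by
    rw [hu, taylor_coeff_zero]; exact hqlam
  have hune : u ≠ 0 := fun h => hu0 (by simp [h])
  -- transfer of `aeval` along `taylor`
  have hNA : N + (algebraMap ℂ (Matrix (Fin n) (Fin n) ℂ)) lam = A := by
    rw [Algebra.algebraMap_eq_smul_one, hN]
    abel
  have htay : ∀ p : ℂ[X], aeval N (taylor lam p) = aeval A p := by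
    intro p
    induction p using Polynomial.induction_on' with
    | add p q hp hq => rw [map_add, map_add, hp, hq, map_add]
    | monomial k a =>
      rw [taylor_monomial, aeval_monomial, map_mul, map_pow, map_add, aeval_X, aeval_C,
        aeval_C, hNA]
  have hNc : aeval N c = 0 := by
    rw [hc, htay]; exact A.aeval_self_charpoly
  set B : Matrix (Fin n) (Fin n) ℂ := aeval N u with hB
  have hmn : m ≤ n := by
    have hdvd : (X - C lam) ^ m ∣ A.charpoly := by
      rw [← hm]; exact Polynomial.pow_rootMultiplicity_dvd _ _
    have h := Polynomial.natDegree_le_of_dvd hdvd hcp0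
    rwa [natDegree_pow, natDegree_X_sub_C, mul_one, A.charpoly_natDegree_eq_dim,
      Fintype.card_fin] at h
  -- the polynomial identity
  have hadj : adjPoly A = (Matrix.charmatrix A).adjugate := by
    unfold adjPoly Matrix.charmatrix
    rw [Matrix.smul_one_eq_diagonal, Matrix.scalar_apply, RingHom.mapMatrix_apply]
  have h1 : Matrix.charmatrix A * adjPoly A
      = A.charpoly • (1 : Matrix (Fin n) (Fin n) ℂ[X]) := by
    rw [hadj, Matrix.mul_adjugate]
    rfl
  have hchar_map : (Matrix.charmatrix A).map (⇑(taylor lam)) = Matrix.charmatrix N := by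
    ext i j
    by_cases h : i = j
    · subst h
      simp only [Matrix.map_apply, Matrix.charmatrix_apply_eq, map_sub, taylor_X, taylor_C, hN,
        Matrix.sub_apply, Matrix.smul_apply, Matrix.one_apply_eq, smul_eq_mul, mul_one, C_sub]
      ring
    · simp only [Matrix.map_apply, Matrix.charmatrix_apply_ne _ _ _ h, map_neg, taylor_C, hN,
        Matrix.sub_apply, Matrix.smul_apply, Matrix.one_apply_ne h, smul_eq_mul, mul_zero,
        sub_zero]
  have hscalar_map : (A.charpoly • (1 : Matrix (Fin n) (Fin n) ℂ[X])).map (⇑(taylor lam))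
      = c • (1 : Matrix (Fin n) (Fin n) ℂ[X]) := by
    ext i j
    by_cases h : i = j <;>
      simp [Matrix.map_apply, Matrix.smul_apply, Matrix.one_apply, h, hc]
  have h2 : Matrix.charmatrix N * ((adjPoly A).map (⇑(taylor lam)))
      = c • (1 : Matrix (Fin n) (Fin n) ℂ[X]) := by
    have := congrArg (fun M : Matrix (Fin n) (Fin n) ℂ[X] =>
      M.map (⇑((taylorAlgHom lam : ℂ[X] →ₐ[ℂ] ℂ[X]) : ℂ[X] →+* ℂ[X]))) h1
    simp only [Matrix.map_mul] at this
    have hco : ⇑((taylorAlgHom lam : ℂ[X] →ₐ[ℂ] ℂ[X]) : ℂ[X] →+* ℂ[X]) = ⇑(taylor lam) := by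
      ext p; simp [taylorAlgHom]; rfl
    rw [hco] at this
    rw [hchar_map, hscalar_map] at this
    exact this
  set Q : (Matrix (Fin n) (Fin n) ℂ)[X] := matPolyEquiv ((adjPoly A).map (⇑(taylor lam)))
    with hQ
  have h3 : (X - C N) * Q = c.map (algebraMap ℂ (Matrix (Fin n) (Fin n) ℂ)) := by
    have := congrArg matPolyEquiv h2
    rwa [map_mul, Matrix.matPolyEquiv_charmatrix, matPolyEquiv_smul_one] at this
  have hcomm : Commute (X : (Matrix (Fin n) (Fin n) ℂ)[X]) (C N) := Polynomial.X_mul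
  set D : (Matrix (Fin n) (Fin n) ℂ)[X] :=
    ∑ k ∈ Finset.range (c.natDegree + 1),
      c.coeff k • ∑ i ∈ Finset.range k,
        (X : (Matrix (Fin n) (Fin n) ℂ)[X]) ^ i * (C N) ^ (k - 1 - i) with hD
  have e3 : ∑ k ∈ Finset.range (c.natDegree + 1),
      c.coeff k • (X : (Matrix (Fin n) (Fin n) ℂ)[X]) ^ k
      = c.map (algebraMap ℂ (Matrix (Fin n) (Fin n) ℂ)) := by
    apply Polynomial.ext
    intro d
    rw [Polynomial.finset_sum_coeff, Polynomial.coeff_map]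
    simp only [Polynomial.coeff_smul, Polynomial.coeff_X_pow, smul_ite, smul_zero]
    rw [Finset.sum_ite_eq]
    by_cases hd : d ∈ Finset.range (c.natDegree + 1)
    · rw [if_pos hd, Algebra.algebraMap_eq_smul_one]
    · rw [if_neg hd, Polynomial.coeff_eq_zero_of_natDegree_lt
        (by simp only [Finset.mem_range, not_lt] at hd; omega), map_zero]
  have e2 : ∑ k ∈ Finset.range (c.natDegree + 1), c.coeff k • (C N) ^ k
      = C (aeval N c) := by
    rw [aeval_eq_sum_range (R := ℂ) (p := c) N, map_sum]
    refine Finset.sum_congr rfl fun k _ => ?_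
    rw [← map_pow, Polynomial.smul_C]
  have h4 : (X - C N) * D = c.map (algebraMap ℂ (Matrix (Fin n) (Fin n) ℂ)) := by
    rw [hD, Finset.mul_sum]
    have e1 : ∀ k ∈ Finset.range (c.natDegree + 1),
        (X - C N) * (c.coeff k • ∑ i ∈ Finset.range k,
          (X : (Matrix (Fin n) (Fin n) ℂ)[X]) ^ i * (C N) ^ (k - 1 - i))
        = c.coeff k • ((X : (Matrix (Fin n) (Fin n) ℂ)[X]) ^ k - (C N) ^ k) := by
      intro k _
      rw [mul_smul_comm, hcomm.mul_geom_sum₂]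
    rw [Finset.sum_congr rfl e1]
    simp only [smul_sub]
    rw [Finset.sum_sub_distrib, e2, hNc, map_zero, sub_zero, e3]
  have h5 : Q = D := by
    have hreg := (Polynomial.monic_X_sub_C N).isRegular.left
    exact hreg (h3.trans h4.symm)
  -- compute the relevant coefficient of D
  have hdeg : c.natDegree = m + u.natDegree := by
    rw [hcu, Polynomial.natDegree_mul (pow_ne_zero m Polynomial.X_ne_zero) hune, natDegree_X_pow]
  have h6 : D.coeff (m - 1) = B := by
    rw [hD, Polynomial.finset_sum_coeff]
    have e5 : ∀ k, (c.coeff k • ∑ i ∈ Finset.range k,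
        (X : (Matrix (Fin n) (Fin n) ℂ)[X]) ^ i * (C N) ^ (k - 1 - i)).coeff (m - 1)
        = c.coeff k • (if m - 1 ∈ Finset.range k then N ^ (k - 1 - (m - 1)) else 0) := by
      intro k
      rw [Polynomial.coeff_smul, Polynomial.finset_sum_coeff]
      congr 1
      have : ∀ i ∈ Finset.range k,
          ((X : (Matrix (Fin n) (Fin n) ℂ)[X]) ^ i * (C N) ^ (k - 1 - i)).coeff (m - 1)
          = if m - 1 = i then N ^ (k - 1 - i) else 0 := by
        intro i _
        rw [← map_pow, Polynomial.X_pow_mul, ← Polynomial.X_pow_mul, Polynomial.X_pow_mul,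
          Polynomial.coeff_mul_X_pow']
        by_cases h : i ≤ m - 1
        · rw [if_pos h, Polynomial.coeff_C]
          by_cases h2 : m - 1 = i
          · subst h2; simp
          · rw [if_neg (fun hz => h2 (by omega)), if_neg h2]
        · rw [if_neg h, if_neg (fun h2 => h (le_of_eq h2.symm))]
      rw [Finset.sum_congr rfl this, Finset.sum_ite_eq]
    rw [Finset.sum_congr rfl fun k _ => e5 k]
    have hmK : m ≤ c.natDegree + 1 := by omega
    rw [Finset.range_eq_Ico, ← Finset.sum_Ico_consecutive _ (Nat.zero_le m) hmK]
    have hz : ∑ k ∈ Finset.Ico 0 m, c.coeff k •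
        (if m - 1 ∈ Finset.Ico 0 k then N ^ (k - 1 - (m - 1)) else 0) = 0 := by
      apply Finset.sum_eq_zero
      intro k hk
      rw [Finset.mem_Ico] at hk
      rw [if_neg (by simp only [Finset.mem_Ico]; omega), smul_zero]
    simp only [Finset.range_eq_Ico]
    rw [hz, zero_add, Finset.sum_Ico_eq_sum_range]
    have e6 : ∀ j ∈ Finset.range (c.natDegree + 1 - m), c.coeff (m + j) •
        (if m - 1 ∈ Finset.Ico 0 (m + j) then N ^ (m + j - 1 - (m - 1)) else 0)
        = u.coeff j • N ^ j := by
      intro j _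
      rw [if_pos (by simp only [Finset.mem_Ico]; omega)]
      have : m + j - 1 - (m - 1) = j := by omega
      rw [this]
      congr 1
      rw [hcu, add_comm m j, Polynomial.coeff_X_pow_mul]
    rw [Finset.sum_congr rfl e6, hB]
    have : c.natDegree + 1 - m = u.natDegree + 1 := by omega
    rw [this, ← aeval_eq_sum_range]
  have hcoeffQ : adjTaylorCoeff A lam (m - 1) = Q.coeff (m - 1) := by
    ext i j
    rw [hQ, matPolyEquiv_coeff_apply]
    rfl
  have hkey : adjTaylorCoeff A lam (m - 1) = B := by
    rw [hcoeffQ, h5, h6]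
  rw [hkey]
  -- final set-theoretic argument
  apply le_antisymm
  · rintro x ⟨y, rfl⟩
    have h7 : N ^ m * B = 0 := by
      have : N ^ m * B = aeval N c := by rw [hcu, map_mul, map_pow, aeval_X, hB]
      rw [this, hNc]
    have hNB : N ^ n * B = 0 := by
      calc N ^ n * B = N ^ (n - m) * (N ^ m * B) := by
            rw [← mul_assoc, ← pow_add, Nat.sub_add_cancel hmn]
        _ = 0 := by rw [h7, mul_zero]
    rw [LinearMap.mem_ker, Matrix.mulVecLin_apply, Matrix.mulVecLin_apply,
      Matrix.mulVec_mulVec, hNB, Matrix.zero_mulVec]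
  · intro v hv
    rw [LinearMap.mem_ker, Matrix.mulVecLin_apply] at hv
    have hX : ¬ (X : ℂ[X]) ∣ u := by rw [Polynomial.X_dvd_iff]; exact hu0
    have hcop : IsCoprime ((X : ℂ[X]) ^ n) u :=
      (Polynomial.irreducible_X.coprime_iff_not_dvd.mpr hX).pow_left
    obtain ⟨a, b, hab⟩ := hcop
    have h8 : aeval N a * N ^ n + aeval N b * B = 1 := by
      have := congrArg (aeval N) hab
      simpa [map_add, map_mul, map_pow, map_one, hB] using this
    have hcommBb : B * aeval N b = aeval N b * B := by
      rw [hB, ← map_mul, ← map_mul, mul_comm]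
    refine ⟨(aeval N b).mulVec v, ?_⟩
    rw [Matrix.mulVecLin_apply, Matrix.mulVec_mulVec, hcommBb]
    calc (aeval N b * B).mulVec v
        = (aeval N a).mulVec ((N ^ n).mulVec v) + (aeval N b * B).mulVec v := by
          rw [hv, Matrix.mulVec_zero, zero_add]
      _ = (aeval N a * N ^ n).mulVec v + (aeval N b * B).mulVec v := by
          rw [Matrix.mulVec_mulVec]
      _ = (aeval N a * N ^ n + aeval N b * B).mulVec v := (Matrix.add_mulVec _ _ _).symm
      _ = v := by rw [h8, Matrix.one_mulVec]
end

section
/- The coefficients V^{[r]}_{M,n} of the Gaussian binomial coefficient [M choose n]_q are symmetric and unimodal: V^{[r]}_{M,n} = V^{[n(M−n)−r]}_{M,n} for all 0 ≤ r ≤ n(M−n), and V^{[r]}_{M,n} ≤ V^{[r+1]}_{M,n} for r < n(M−n)/2. -/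
/-!
Dividing out the q-Pochhammer products shows that `[M choose n]_q` equals
`q^{-(0 + 1 + ⋯ + (n-1))} ∑_S q^{∑ S}`, the sum running over the `n`-subsets `S` of
`{0, …, M-1}`, so `V^{[r]}` counts the subsets of sum `t = r + (0 + 1 + ⋯ + (n-1))`. The
reflection `i ↦ M - 1 - i` gives the symmetry.

Unimodality is Proctor's `sl₂` argument. Let `U` move one element `i` of `S` to `i + 1`
(when `i + 1 ∉ S`) with weight `√((i + 1)(M - i - 1))`: this is the lowering operator of the
irreducible `M`-dimensional representation of `sl₂` acting on the `n`-th exterior power, where no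
signs appear because `i` and `i + 1` are adjacent. The commutation relation of `sl₂` says that
`UᵀU - UUᵀ` acts on subsets of sum `t` as the scalar `n(M - 1) - 2t`. When this is positive,
`UᵀU` is positive definite there, so `U` is injective from sum `t` to sum `t + 1`.
-/

open Finset Polynomial Matrix

theorem Matrix.card_le_card_of_transpose_mul_self_eq {α β γ : Type*} [Fintype α] [Fintype β]
    [Fintype γ] [DecidableEq α] (U : Matrix β α ℝ) (V : Matrix α γ ℝ) {c : ℝ} (hc : 0 < c)
    (h : Uᵀ * U = V * Vᵀ + c • 1) : Fintype.card α ≤ Fintype.card β := by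
  have hpos : (V * Vᵀ + c • (1 : Matrix α α ℝ)).PosDef :=
    PosDef.posSemidef_add (by simpa using posSemidef_self_mul_conjTranspose V)
      ((PosDef.one (n := α) (R := ℝ)).smul hc)
  calc Fintype.card α = (Uᵀ * U).rank := by rw [h, rank_of_isUnit _ hpos.isUnit]
    _ = U.rank := rank_transpose_mul_self U
    _ ≤ Fintype.card β := rank_le_card_height U

namespace GaussianBinomial

noncomputable def qPochhammer (k : ℕ) : ℤ[X] := ∏ j ∈ range k, (1 - X ^ (j + 1))

noncomputable def subsetSumPoly (M n : ℕ) : ℤ[X] := ∑ S ∈ powersetCard n (range M), X ^ ∑ i ∈ S, i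

def level (M n t : ℕ) : Finset (Finset ℕ) := {S ∈ powersetCard n (range M) | ∑ i ∈ S, i = t}

lemma qPochhammer_succ (k : ℕ) : qPochhammer (k + 1) = qPochhammer k * (1 - X ^ (k + 1)) :=
  prod_range_succ _ _

lemma subsetSumPoly_zero_right (M : ℕ) : subsetSumPoly M 0 = 1 := by
  simp [subsetSumPoly]

lemma subsetSumPoly_self (n : ℕ) : subsetSumPoly n n = X ^ ∑ i ∈ range n, i := by
  simpa [subsetSumPoly] using congrArg (∑ S ∈ ·, (X : ℤ[X]) ^ ∑ i ∈ S, i)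
    (powersetCard_self (range n))

lemma subsetSumPoly_succ_succ (M k : ℕ) :
    subsetSumPoly (M + 1) (k + 1) = subsetSumPoly M (k + 1) + X ^ M * subsetSumPoly M k := by
  have hM : ∀ {j} {S : Finset ℕ}, S ∈ powersetCard j (range M) → M ∉ S :=
    fun hS h => notMem_range_self ((mem_powersetCard.1 hS).1 h)
  have hdisj : Disjoint (powersetCard (k + 1) (range M))
      ((powersetCard k (range M)).image (insert M)) := by
    simp only [disjoint_left, mem_image, not_exists, not_and]
    exact fun S hS S' _ hS' => hM hS (hS' ▸ mem_insert_self M S')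
  rw [subsetSumPoly, range_add_one, powersetCard_succ_insert notMem_range_self, sum_union hdisj,
    sum_image fun S hS S' hS' => insert_erase_invOn.2.injOn (hM hS) (hM hS'), subsetSumPoly,
    subsetSumPoly, mul_sum]
  congr 1
  exact sum_congr rfl fun S hS => by rw [sum_insert (hM hS), pow_add]

theorem subsetSumPoly_mul_qPochhammer (n m : ℕ) :
    subsetSumPoly (n + m) n * qPochhammer n * qPochhammer m =
      X ^ (∑ i ∈ range n, i) * qPochhammer (n + m) := by
  induction n, m using Nat.pincerRecursion with
  | Ha0 n => simp [subsetSumPoly_self, qPochhammer]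
  | H0b m => simp [subsetSumPoly_zero_right, qPochhammer]
  | H k m ih₁ ih₂ =>
    rw [show k + (m + 1) = k + 1 + m by omega, qPochhammer_succ] at ih₁
    rw [show k + 1 + (m + 1) = k + 1 + m + 1 by omega, subsetSumPoly_succ_succ, qPochhammer_succ,
      qPochhammer_succ, qPochhammer_succ, sum_range_succ]
    simp only [Nat.succ_eq_add_one, qPochhammer_succ, sum_range_succ] at ih₂
    linear_combination (X ^ (k + 1 + m) * (1 - X ^ (k + 1))) * ih₁ + (1 - X ^ (m + 1)) * ih₂

lemma coeff_subsetSumPoly (M n t : ℕ) : (subsetSumPoly M n).coeff t = #(level M n t) := by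
  simp [subsetSumPoly, coeff_X_pow, level, eq_comm]

lemma qPochhammer_ne_zero (k : ℕ) : qPochhammer k ≠ 0 := fun h => by
  simpa [qPochhammer, eval_prod] using congrArg (eval 0) h

lemma subsetSumPoly_eq_mul_X_pow {M n : ℕ} {P : ℤ[X]} (h : n ≤ M)
    (hP : P * qPochhammer n * qPochhammer (M - n) = qPochhammer M) :
    subsetSumPoly M n = P * X ^ ∑ i ∈ range n, i := by
  obtain ⟨m, rfl⟩ := Nat.exists_eq_add_of_le h
  rw [add_tsub_cancel_left] at hP
  refine mul_right_cancel₀ (mul_ne_zero (qPochhammer_ne_zero n) (qPochhammer_ne_zero m)) ?_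
  linear_combination subsetSumPoly_mul_qPochhammer n m - X ^ (∑ i ∈ range n, i) * hP

lemma reflect_mem_level {M n t t' : ℕ} {S : Finset ℕ} (hS : S ∈ level M n t)
    (ht : t + t' = n * (M - 1)) : S.image (M - 1 - ·) ∈ level M n t' := by
  simp only [level, mem_filter, mem_powersetCard] at hS ⊢
  obtain ⟨⟨hSM, rfl⟩, rfl⟩ := hS
  have hlt : ∀ i ∈ S, i < M := fun i hi => mem_range.1 (hSM hi)
  have hinj : Set.InjOn (M - 1 - ·) S := fun i hi j hj hij => by
    have := hlt i hi; have := hlt j hj; simp only at hij; omega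
  refine ⟨⟨fun x hx => ?_, card_image_of_injOn hinj⟩, ?_⟩
  · obtain ⟨i, hi, rfl⟩ := mem_image.1 hx
    have := hlt i hi
    exact mem_range.2 (by omega)
  · have hsum : ∑ i ∈ S, (M - 1 - i) + ∑ i ∈ S, i = #S * (M - 1) := by
      rw [← sum_add_distrib, ← smul_eq_mul, ← sum_const]
      exact sum_congr rfl fun i hi => by have := hlt i hi; omega
    rw [sum_image hinj]
    omega

lemma reflect_reflect {M : ℕ} {S : Finset ℕ} (hS : S ⊆ range M) :
    (S.image (M - 1 - ·)).image (M - 1 - ·) = S := by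
  rw [image_image]
  refine (image_congr fun i hi => ?_).trans image_id
  have := mem_range.1 (hS hi)
  simp only [Function.comp_apply, id_eq]
  omega

theorem card_level_eq_of_add_eq {M n t t' : ℕ} (ht : t + t' = n * (M - 1)) :
    #(level M n t) = #(level M n t') := by
  have hsub : ∀ {t S}, S ∈ level M n t → S ⊆ range M :=
    fun hS => (mem_powersetCard.1 (mem_filter.1 hS).1).1
  exact card_nbij' (·.image (M - 1 - ·)) (·.image (M - 1 - ·))
    (fun S hS => reflect_mem_level hS ht) (fun S hS => reflect_mem_level hS (by omega))
    (fun S hS => reflect_reflect (hsub hS)) (fun S hS => reflect_reflect (hsub hS))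

def IsRaise (i : ℕ) (S T : Finset ℕ) : Prop := i ∈ S ∧ i + 1 ∉ S ∧ T = insert (i + 1) (S.erase i)

instance (i : ℕ) (S T : Finset ℕ) : Decidable (IsRaise i S T) :=
  inferInstanceAs (Decidable (_ ∧ _ ∧ _))

lemma isRaise_iff_lower {k : ℕ} {R S : Finset ℕ} :
    IsRaise k R S ↔ k + 1 ∈ S ∧ k ∉ S ∧ R = insert k (S.erase (k + 1)) := by
  unfold IsRaise
  constructor <;> rintro ⟨h₁, h₂, rfl⟩ <;> refine ⟨by simp, by simp, ?_⟩ <;> ext x <;> simp <;>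
    grind

lemma IsRaise.unique_right {i : ℕ} {S T T' : Finset ℕ} (h : IsRaise i S T) (h' : IsRaise i S T') :
    T = T' :=
  h.2.2.trans h'.2.2.symm

lemma IsRaise.unique_left {k : ℕ} {R R' S : Finset ℕ} (h : IsRaise k R S) (h' : IsRaise k R' S) :
    R = R' :=
  (isRaise_iff_lower.1 h).2.2.trans (isRaise_iff_lower.1 h').2.2.symm

lemma IsRaise.unique_index {i j : ℕ} {S T : Finset ℕ} (hi : IsRaise i S T) (hj : IsRaise j S T) :
    i = j := by
  obtain ⟨-, hi₁, rfl⟩ := hi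
  have h := mem_insert_self (i + 1) (S.erase i)
  rw [hj.2.2, mem_insert, mem_erase] at h
  grind

/-- Since `S ≠ S'`, the points `i`, `i + 1`, `j`, `j + 1` are pairwise distinct, so the two moves
commute. -/
theorem exists_isRaise_isRaise_comm {S S' : Finset ℕ} (hne : S ≠ S') (i j : ℕ) :
    (∃ T, IsRaise i S T ∧ IsRaise j S' T) ↔ ∃ R, IsRaise j R S ∧ IsRaise i R S' := by
  unfold IsRaise
  constructor
  · rintro ⟨T, ⟨hi, hi₁, rfl⟩, hj, hj₁, hT⟩
    simp only [Finset.ext_iff, mem_insert, mem_erase] at hT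
    exact ⟨insert j (S.erase (j + 1)), by grind⟩
  · rintro ⟨R, ⟨hj, hj₁, rfl⟩, hi, hi₁, hR⟩
    simp only [Finset.ext_iff, mem_insert, mem_erase] at hR
    exact ⟨insert (i + 1) (insert (j + 1) ((R.erase i).erase j)), by grind⟩

lemma IsRaise.card_eq {i : ℕ} {S T : Finset ℕ} (h : IsRaise i S T) : #T = #S := by
  obtain ⟨hi, hi₁, rfl⟩ := h
  rw [card_insert_of_notMem fun h => hi₁ (mem_of_mem_erase h), card_erase_add_one hi]

lemma IsRaise.sum_eq {i : ℕ} {S T : Finset ℕ} (h : IsRaise i S T) :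
    ∑ x ∈ T, x = ∑ x ∈ S, x + 1 := by
  obtain ⟨hi, hi₁, rfl⟩ := h
  rw [sum_insert fun h => hi₁ (mem_of_mem_erase h), ← add_sum_erase S _ hi]
  ring

lemma IsRaise.mem_level_succ {M n t i : ℕ} {S T : Finset ℕ} (hS : S ∈ level M n t)
    (h : IsRaise i S T) (hi : i + 1 < M) : T ∈ level M n (t + 1) := by
  simp only [level, mem_filter, mem_powersetCard] at hS ⊢
  refine ⟨⟨?_, h.card_eq.trans hS.1.2⟩, h.sum_eq.trans (by rw [hS.2])⟩
  obtain ⟨-, -, rfl⟩ := h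
  exact insert_subset (mem_range.2 hi) ((erase_subset _ _).trans hS.1.1)

lemma IsRaise.left_mem_powersetCard {M n k : ℕ} {R S : Finset ℕ} (hS : S ∈ powersetCard n (range M))
    (h : IsRaise k R S) : R ∈ powersetCard n (range M) := by
  rw [Finset.mem_powersetCard] at hS ⊢
  refine ⟨?_, h.card_eq.symm.trans hS.2⟩
  obtain ⟨hk, -, rfl⟩ := isRaise_iff_lower.1 h
  exact insert_subset (mem_range.2 ((mem_range.1 (hS.1 hk)).trans' k.lt_succ_self))
    ((erase_subset _ _).trans hS.1)

noncomputable def raiseWeight (M i : ℕ) : ℝ := √((i + 1) * (M - (i + 1)))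

lemma raiseWeight_sq {M i : ℕ} (hi : i < M) : raiseWeight M i ^ 2 = (i + 1) * (M - (i + 1)) :=
  Real.sq_sqrt (mul_nonneg (by positivity) (sub_nonneg.2 (by exact_mod_cast hi)))

lemma succ_lt_of_raiseWeight_ne_zero {M i : ℕ} (hi : i < M) (h : raiseWeight M i ≠ 0) :
    i + 1 < M := by
  by_contra! h'
  obtain rfl : M = i + 1 := by omega
  simp [raiseWeight] at h

noncomputable def raiseCoeff (M : ℕ) (T S : Finset ℕ) : ℝ :=
  ∑ i ∈ range M, if IsRaise i S T then raiseWeight M i else 0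

open scoped Classical in
lemma sum_mul_sum_ite_of_unique {ι κ R : Type*} [NonUnitalNonAssocSemiring R] (B : Finset κ)
    (I : Finset ι) (p q : ι → κ → Prop) [∀ i x, Decidable (p i x)] [∀ i x, Decidable (q i x)]
    (w v : ι → R)
    (hp : ∀ i x y, p i x → p i y → x = y)
    (hB : ∀ i ∈ I, ∀ x, p i x → w i ≠ 0 → x ∈ B) :
    ∑ x ∈ B, (∑ i ∈ I, if p i x then w i else 0) * (∑ j ∈ I, if q j x then v j else 0) =
      ∑ i ∈ I, ∑ j ∈ I, if ∃ x, p i x ∧ q j x then w i * v j else 0 := by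
  simp_rw [sum_mul_sum, ite_zero_mul_ite_zero]
  rw [sum_comm]
  refine sum_congr rfl fun i hi => ?_
  rw [sum_comm]
  refine sum_congr rfl fun j _ => ?_
  split_ifs with h
  · obtain ⟨x, hpx, hqx⟩ := h
    by_cases hw : w i = 0
    · simp [hw]
    rw [sum_eq_single_of_mem x (hB i hi x hpx hw) fun y _ hyx =>
      if_neg fun hy => hyx (hp i y x hy.1 hpx), if_pos ⟨hpx, hqx⟩]
  · exact sum_eq_zero fun x _ => if_neg fun hx => h ⟨x, hx⟩

open scoped Classical in
lemma sum_sum_ite_exists_isRaise_isRaise {R : Type*} [Semiring R] (I : Finset ℕ) (S : Finset ℕ)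
    (w : ℕ → R) :
    ∑ i ∈ I, ∑ j ∈ I, (if ∃ T, IsRaise i S T ∧ IsRaise j S T then w i * w j else 0) =
      ∑ i ∈ I, if i ∈ S ∧ i + 1 ∉ S then w i ^ 2 else 0 := by
  refine sum_congr rfl fun i hi => ?_
  rw [sum_eq_single_of_mem i hi fun j _ hji =>
    if_neg fun ⟨T, hiT, hjT⟩ => hji (hjT.unique_index hiT)]
  simp [IsRaise, sq]

open scoped Classical in
lemma sum_sum_ite_exists_isRaise_isRaise_lower {R : Type*} [Semiring R] (I : Finset ℕ)
    (S : Finset ℕ) (w : ℕ → R) :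
    ∑ k ∈ I, ∑ l ∈ I, (if ∃ R, IsRaise k R S ∧ IsRaise l R S then w k * w l else 0) =
      ∑ k ∈ I, if k + 1 ∈ S ∧ k ∉ S then w k ^ 2 else 0 := by
  refine sum_congr rfl fun k hk => ?_
  rw [sum_eq_single_of_mem k hk fun l _ hlk =>
    if_neg fun ⟨R, hkR, hlR⟩ => hlk (hlR.unique_index hkR)]
  simp [isRaise_iff_lower, sq]

lemma sum_ite_raise_sub_sum_ite_lower {G : Type*} [AddCommGroup G] {M : ℕ} {S : Finset ℕ}
    (hS : S ⊆ range M) (f : ℕ → G) (hf : f 0 = 0) :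
    ∑ i ∈ range M, (if i ∈ S ∧ i + 1 ∉ S then f (i + 1) else 0) -
        ∑ i ∈ range M, (if i + 1 ∈ S ∧ i ∉ S then f (i + 1) else 0) =
      ∑ i ∈ S, (f (i + 1) - f i) := by
  have hshift : ∑ i ∈ range M, (if i + 1 ∈ S then f (i + 1) else 0) =
      ∑ i ∈ range M, if i ∈ S then f i else 0 := by
    have h₁ := sum_range_succ' (fun i => if i ∈ S then f i else 0) M
    have h₂ := sum_range_succ (fun i => if i ∈ S then f i else 0) M
    simp only [hf, ite_self, add_zero, if_neg fun h => notMem_range_self (hS h)] at h₁ h₂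
    rw [← h₁, h₂]
  calc _ = ∑ i ∈ range M,
          ((if i ∈ S then f (i + 1) else 0) - if i + 1 ∈ S then f (i + 1) else 0) := by
        rw [← sum_sub_distrib]
        refine sum_congr rfl fun i _ => ?_
        by_cases h : i ∈ S <;> by_cases h' : i + 1 ∈ S <;> simp [h, h']
    _ = ∑ i ∈ range M, if i ∈ S then f (i + 1) - f i else 0 := by
        rw [sum_sub_distrib, hshift, ← sum_sub_distrib]
        exact sum_congr rfl fun i _ => by split_ifs <;> simp
    _ = _ := by rw [← sum_filter, filter_mem_eq_inter, inter_eq_right.2 hS]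

open scoped Classical in
lemma sum_level_succ_raiseCoeff_mul_raiseCoeff {M n t : ℕ} {S : Finset ℕ} (S' : Finset ℕ)
    (hS : S ∈ level M n t) :
    ∑ T ∈ level M n (t + 1), raiseCoeff M T S * raiseCoeff M T S' =
      ∑ i ∈ range M, ∑ j ∈ range M,
        if ∃ T, IsRaise i S T ∧ IsRaise j S' T then raiseWeight M i * raiseWeight M j else 0 := by
  unfold raiseCoeff
  exact sum_mul_sum_ite_of_unique _ _ (fun i T => IsRaise i S T) (fun j T => IsRaise j S' T) _ _
    (fun _ _ _ => IsRaise.unique_right)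
    fun _ hi _ h hw => h.mem_level_succ hS (succ_lt_of_raiseWeight_ne_zero (mem_range.1 hi) hw)

open scoped Classical in
lemma sum_powersetCard_raiseCoeff_mul_raiseCoeff {M n : ℕ} {S : Finset ℕ} (S' : Finset ℕ)
    (hS : S ∈ powersetCard n (range M)) :
    ∑ R ∈ powersetCard n (range M), raiseCoeff M S R * raiseCoeff M S' R =
      ∑ k ∈ range M, ∑ l ∈ range M,
        if ∃ R, IsRaise k R S ∧ IsRaise l R S' then raiseWeight M k * raiseWeight M l else 0 := by
  unfold raiseCoeff
  exact sum_mul_sum_ite_of_unique _ _ (fun k R => IsRaise k R S) (fun l R => IsRaise l R S') _ _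
    (fun _ _ _ => IsRaise.unique_left)
    fun _ _ _ h _ => h.left_mem_powersetCard hS

theorem sum_raiseCoeff_mul_raiseCoeff_sub {M n t : ℕ} {S : Finset ℕ} (S' : Finset ℕ)
    (hS : S ∈ level M n t) :
    ∑ T ∈ level M n (t + 1), raiseCoeff M T S * raiseCoeff M T S' -
        ∑ R ∈ powersetCard n (range M), raiseCoeff M S R * raiseCoeff M S' R =
      if S = S' then (n : ℝ) * (M - 1) - 2 * t else 0 := by
  obtain ⟨hbox, hsum⟩ := mem_filter.1 hS
  obtain ⟨hsub, hcard⟩ := mem_powersetCard.1 hbox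
  rw [sum_level_succ_raiseCoeff_mul_raiseCoeff S' hS,
    sum_powersetCard_raiseCoeff_mul_raiseCoeff S' hbox]
  split_ifs with h
  · subst h
    have hw : ∀ (p : ℕ → Prop) [DecidablePred p],
        ∑ i ∈ range M, (if p i then raiseWeight M i ^ 2 else 0) =
          ∑ i ∈ range M, if p i then ((i + 1 : ℕ) : ℝ) * (M - (i + 1 : ℕ)) else 0 :=
      fun p _ => sum_congr rfl fun i hi => by
        rw [raiseWeight_sq (mem_range.1 hi)]
        push_cast
        rfl
    rw [sum_sum_ite_exists_isRaise_isRaise, sum_sum_ite_exists_isRaise_isRaise_lower, hw, hw,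
      sum_ite_raise_sub_sum_ite_lower hsub (fun i : ℕ => (i : ℝ) * (M - i)) (by simp)]
    rw [← hsum, ← hcard, card_eq_sum_ones, Nat.cast_sum, Nat.cast_sum, sum_mul, mul_sum,
      ← sum_sub_distrib]
    exact sum_congr rfl fun i _ => by push_cast; ring
  · rw [sub_eq_zero, sum_comm]
    exact sum_congr rfl fun j _ => sum_congr rfl fun i _ => by
      rw [exists_isRaise_isRaise_comm h, mul_comm]

noncomputable def raiseMatrix (M : ℕ) (A B : Finset (Finset ℕ)) : Matrix B A ℝ :=
  of fun T S => raiseCoeff M T S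

theorem transpose_raiseMatrix_mul_raiseMatrix (M n t : ℕ) :
    (raiseMatrix M (level M n t) (level M n (t + 1)))ᵀ *
        raiseMatrix M (level M n t) (level M n (t + 1)) =
      raiseMatrix M (powersetCard n (range M)) (level M n t) *
          (raiseMatrix M (powersetCard n (range M)) (level M n t))ᵀ +
        ((n : ℝ) * (M - 1) - 2 * t) • 1 := by
  ext S S'
  rw [Matrix.add_apply, ← sub_eq_iff_eq_add', Matrix.smul_apply, one_apply]
  simp only [mul_apply, transpose_apply, raiseMatrix, of_apply]
  rw [sum_coe_sort (level M n (t + 1)) fun T => raiseCoeff M T S * raiseCoeff M T S',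
    sum_coe_sort (powersetCard n (range M)) fun R => raiseCoeff M S R * raiseCoeff M S' R,
    sum_raiseCoeff_mul_raiseCoeff_sub S'.1 S.2]
  rw [smul_eq_mul, mul_ite, mul_one, mul_zero]
  exact if_congr Subtype.ext_iff.symm rfl rfl

theorem card_level_le_card_level_succ {M n t : ℕ} (ht : 2 * t < n * (M - 1)) :
    #(level M n t) ≤ #(level M n (t + 1)) := by
  have hc : (0 : ℝ) < n * (M - 1) - 2 * t := by
    have hM : 1 ≤ M := by by_contra! h; simp_all
    have : ((2 * t : ℕ) : ℝ) < (n * (M - 1) : ℕ) := by exact_mod_cast ht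
    push_cast [hM] at this
    linarith
  simpa using card_le_card_of_transpose_mul_self_eq _ _ hc
    (transpose_raiseMatrix_mul_raiseMatrix M n t)

end GaussianBinomial

open GaussianBinomial

/-- Symmetry and unimodality of the coefficients of the Gaussian binomial
coefficient: if `P` is the integer polynomial with
`P(q) ∏_{j=1}^n (1-q^j) ∏_{j=1}^{M-n} (1-q^j) = ∏_{j=1}^M (1-q^j)` for all `q`
(i.e. `P = [M choose n]_q`), then its coefficients `V^{[r]}_{M,n} = P.coeff r`
satisfy `V^{[r]} = V^{[n(M-n)-r]}` for `0 ≤ r ≤ n(M-n)` and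
`V^{[r]} ≤ V^{[r+1]}` for `r < n(M-n)/2`. -/
theorem gaussian_binomial_symmetric_unimodal (M n : ℕ) (h : n ≤ M)
    (P : Polynomial ℤ)
    (hP : ∀ q : ℂ,
      (P.map (Int.castRingHom ℂ)).eval q *
          (∏ j ∈ Finset.range n, (1 - q ^ (j + 1))) *
          (∏ j ∈ Finset.range (M - n), (1 - q ^ (j + 1))) =
        ∏ j ∈ Finset.range M, (1 - q ^ (j + 1))) :
    (∀ r : ℕ, r ≤ n * (M - n) → P.coeff r = P.coeff (n * (M - n) - r)) ∧
    (∀ r : ℕ, 2 * r < n * (M - n) → P.coeff r ≤ P.coeff (r + 1)) := by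
  have hPoly : P * qPochhammer n * qPochhammer (M - n) = qPochhammer M :=
    map_injective (Int.castRingHom ℂ) (RingHom.injective_int _) (funext fun q => by
      simpa [qPochhammer, Polynomial.map_prod, eval_prod] using hP q)
  have hcoeff (r : ℕ) : P.coeff r = #(level M n (r + ∑ i ∈ range n, i)) := by
    rw [← coeff_subsetSumPoly, subsetSumPoly_eq_mul_X_pow h hPoly, coeff_mul_X_pow]
  have hdim : n * (M - n) + 2 * ∑ i ∈ range n, i = n * (M - 1) := by
    rw [mul_comm 2, sum_range_id_mul_two, ← Nat.mul_add]
    rcases n with _ | n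
    · simp
    · congr 1
      omega
  refine ⟨fun r hr => ?_, fun r hr => ?_⟩
  · rw [hcoeff, hcoeff]
    exact_mod_cast card_level_eq_of_add_eq (by omega)
  · rw [hcoeff, hcoeff, add_right_comm]
    exact_mod_cast card_level_le_card_level_succ (by omega)
end

section
/- Taylor expansion of the logarithm of the Gaussian binomial coefficient near q = 1: for q = e^{2πx/(M+1)}, log [M choose n]_q = log (M choose n) + (π n(M−n)/(M+1)) x + Σ_{s≥1} ((−1)^{s+1} ζ(2s) A^{(s)}_{M,n} / (s(2s+1))) x^{2s}, where A^{(s)}_{M,n} = (B_{2s+1}(M+1) − B_{2s+1}(M−n+1) − B_{2s+1}(n+1))/(M+1)^{2s}, B_n denoting Bernoulli polynomials, and moreover 0 < A^{(s)}_{M,n} < M+1 for 0 < n < M. -/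
set_option maxHeartbeats 1000000


open Real

/-- The Gaussian binomial coefficient `[M choose n]_q` as the product
`∏_{j=1}^n (1 - q^{M-n+j})/(1 - q^j)`. -/
noncomputable def qbinom (M n : ℕ) (q : ℝ) : ℝ :=
  ∏ j ∈ Finset.range n, (1 - q ^ (M - n + j + 1)) / (1 - q ^ (j + 1))

/-- `A^{(s)}_{M,n} = (B_{2s+1}(M+1) - B_{2s+1}(M-n+1) - B_{2s+1}(n+1))/(M+1)^{2s}`,
with `B_k` the Bernoulli polynomials. -/
noncomputable def Acoef (M n s : ℕ) : ℝ :=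
  ((Polynomial.aeval ((M : ℝ) + 1) (Polynomial.bernoulli (2 * s + 1)))
    - (Polynomial.aeval ((M : ℝ) - n + 1) (Polynomial.bernoulli (2 * s + 1)))
    - (Polynomial.aeval ((n : ℝ) + 1) (Polynomial.bernoulli (2 * s + 1))))
    / ((M : ℝ) + 1) ^ (2 * s)

/-! ### Auxiliary definitions and lemmas -/

/-- The zeta-like sum `∑_{k≥1} 1/k^p`. -/
noncomputable def Zs (p : ℕ) : ℝ := ∑' k : ℕ, (1 : ℝ) / ((k : ℝ) + 1) ^ p

lemma summable_Z {p : ℕ} (hp : 2 ≤ p) :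
    Summable (fun k : ℕ => (1 : ℝ) / ((k : ℝ) + 1) ^ p) := by
  have h := summable_one_div_nat_pow.mpr (by omega : 1 < p)
  have h2 := (summable_nat_add_iff (f := fun n : ℕ => 1 / (n : ℝ) ^ p) 1).mpr h
  simpa [Nat.cast_add] using h2

lemma sinh_div_pos {u : ℝ} (hu : u ≠ 0) : 0 < Real.sinh u / u := by
  rcases hu.lt_or_gt with h | h
  · exact div_pos_of_neg_of_neg (by simpa using Real.sinh_lt_sinh.mpr h) h
  · exact div_pos (by simpa using Real.sinh_lt_sinh.mpr h) h

lemma one_sub_exp (u : ℝ) : 1 - Real.exp u = -2 * Real.exp (u / 2) * Real.sinh (u / 2) := by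
  have e1 : Real.exp (u / 2) * Real.exp (u / 2) = Real.exp u := by
    rw [← Real.exp_add]; ring_nf
  have e2 : Real.exp (u / 2) * Real.exp (-(u / 2)) = 1 := by
    rw [← Real.exp_add]; simp
  rw [Real.sinh_eq]
  linear_combination e1 - e2

/-- Euler product for `sinh(πy)/(πy)`. -/
lemma tendsto_sinh_prod (y : ℝ) (hy : y ≠ 0) :
    Filter.Tendsto (fun N : ℕ => ∏ k ∈ Finset.range N, (1 + y ^ 2 / ((k : ℝ) + 1) ^ 2))
      Filter.atTop (nhds (Real.sinh (π * y) / (π * y))) := by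
  have h := Complex.tendsto_euler_sin_prod (y * Complex.I)
  have hc : ((π : ℂ) * y * Complex.I) ≠ 0 := by
    refine mul_ne_zero (mul_ne_zero ?_ ?_) Complex.I_ne_zero
    · exact Complex.ofReal_ne_zero.mpr Real.pi_ne_zero
    · exact Complex.ofReal_ne_zero.mpr hy
  have h2 := h.div_const ((π : ℂ) * y * Complex.I)
  have key : ∀ N : ℕ,
      ((π : ℂ) * (y * Complex.I) * ∏ j ∈ Finset.range N,
        (1 - ((y : ℂ) * Complex.I) ^ 2 / ((j : ℂ) + 1) ^ 2)) / ((π : ℂ) * y * Complex.I)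
      = ((∏ k ∈ Finset.range N, (1 + y ^ 2 / ((k : ℝ) + 1) ^ 2) : ℝ) : ℂ) := by
    intro N
    rw [mul_comm]
    rw [mul_div_assoc]
    rw [show (π : ℂ) * (y * Complex.I) = (π : ℂ) * y * Complex.I by ring, div_self hc, mul_one]
    push_cast
    refine Finset.prod_congr rfl fun j _ => ?_
    have : ((y : ℂ) * Complex.I) ^ 2 = -(y : ℂ) ^ 2 := by
      rw [mul_pow, Complex.I_sq]; ring
    rw [this]; ring
  have hlim : Complex.sin ((π : ℂ) * (y * Complex.I)) / ((π : ℂ) * y * Complex.I)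
      = ((Real.sinh (π * y) / (π * y) : ℝ) : ℂ) := by
    rw [show (π : ℂ) * (y * Complex.I) = ((π * y : ℝ) : ℂ) * Complex.I by push_cast; ring,
      Complex.sin_mul_I, ← Complex.ofReal_sinh]
    rw [mul_comm ((Real.sinh (π * y) : ℝ) : ℂ) Complex.I]
    rw [show ((π : ℂ) * y * Complex.I) = Complex.I * (((π * y : ℝ)) : ℂ) by push_cast; ring]
    rw [mul_div_mul_left _ _ Complex.I_ne_zero]
    push_cast
    ring
  rw [hlim] at h2
  have h3 : Filter.Tendsto (fun N : ℕ =>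
      (((∏ k ∈ Finset.range N, (1 + y ^ 2 / ((k : ℝ) + 1) ^ 2) : ℝ)) : ℂ))
      Filter.atTop (nhds ((Real.sinh (π * y) / (π * y) : ℝ) : ℂ)) := by
    refine h2.congr fun N => key N
  have h4 := (Complex.continuous_re.tendsto _).comp h3
  simp only [Function.comp_def, Complex.ofReal_re] at h4
  exact h4

/-- Power series of `log (sinh (π y)/(π y))` in terms of zeta values. -/
lemma hasSum_log_sinh {y : ℝ} (hy : |y| < 1) :
    HasSum (fun m : ℕ => (-1) ^ m * Zs (2 * (m + 1)) * y ^ (2 * (m + 1)) / ((m : ℝ) + 1))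
      (Real.log (Real.sinh (π * y) / (π * y))) := by
  rcases eq_or_ne y 0 with rfl | hy0
  · have : (fun m : ℕ => (-1) ^ m * Zs (2 * (m + 1)) * (0:ℝ) ^ (2 * (m + 1)) / ((m : ℝ) + 1))
        = fun _ => (0:ℝ) := by
      funext m; rw [zero_pow (by omega)]; ring
    rw [this]; simpa using hasSum_zero
  -- notation
  have hysq : y ^ 2 < 1 := by
    have := abs_lt.mp hy
    nlinarith [abs_nonneg y, sq_abs y]
  set g : ℕ → ℝ := fun k => Real.log (1 + y ^ 2 / ((k : ℝ) + 1) ^ 2) with hg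
  have hk1 : ∀ k : ℕ, (0:ℝ) < ((k : ℝ) + 1) ^ 2 := fun k => by positivity
  have hfacpos : ∀ k : ℕ, (0:ℝ) < 1 + y ^ 2 / ((k : ℝ) + 1) ^ 2 := fun k => by positivity
  have hL : (0:ℝ) < Real.sinh (π * y) / (π * y) := by
    have : π * y ≠ 0 := mul_ne_zero Real.pi_ne_zero hy0
    have := sinh_div_pos this
    simpa using this
  -- partial sums of g tend to log L
  have hP := tendsto_sinh_prod y hy0
  have hlogP := ((Real.continuousAt_log hL.ne').tendsto).comp hP
  have hT : Filter.Tendsto (fun N : ℕ => ∑ k ∈ Finset.range N, g k) Filter.atTop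
      (nhds (Real.log (Real.sinh (π * y) / (π * y)))) := by
    refine hlogP.congr fun N => ?_
    simp only [Function.comp_apply]
    rw [Real.log_prod fun k _ => (hfacpos k).ne']
  have hgnn : ∀ k, 0 ≤ g k := fun k =>
    Real.log_nonneg (by nlinarith [hk1 k, sq_nonneg y, div_nonneg (sq_nonneg y) (hk1 k).le])
  have hmono : Monotone fun N : ℕ => ∑ k ∈ Finset.range N, g k := fun a b hab =>
    Finset.sum_le_sum_of_subset_of_nonneg (Finset.range_subset_range.2 hab) fun i _ _ => hgnn i
  have hgsum : Summable g :=
    summable_of_sum_range_le hgnn fun N => hmono.ge_of_tendsto hT N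
  have hgHasSum : HasSum g (Real.log (Real.sinh (π * y) / (π * y))) := by
    have h1 := hgsum.hasSum
    have h2 := h1.tendsto_sum_nat
    rwa [tendsto_nhds_unique h2 hT] at h1
  -- expansion of each factor
  have hfiber : ∀ k : ℕ, HasSum
      (fun m : ℕ => (-1) ^ m * (y ^ 2 / ((k : ℝ) + 1) ^ 2) ^ (m + 1) / ((m : ℝ) + 1)) (g k) := by
    intro k
    set u : ℝ := y ^ 2 / ((k : ℝ) + 1) ^ 2 with hu
    have hu0 : 0 ≤ u := div_nonneg (sq_nonneg y) (hk1 k).le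
    have hu1 : u < 1 := by
      have h1 : (1:ℝ) ≤ ((k : ℝ) + 1) ^ 2 := by
        have : (0:ℝ) ≤ (k : ℝ) := Nat.cast_nonneg k
        nlinarith
      calc u ≤ y ^ 2 := by
              rw [hu, div_le_iff₀ (hk1 k)]; nlinarith [sq_nonneg y]
        _ < 1 := hysq
    have habs : |(-u)| < 1 := by rw [abs_neg, abs_of_nonneg hu0]; exact hu1
    have h1 := Real.hasSum_pow_div_log_of_abs_lt_one habs
    have h2 := h1.neg
    rw [sub_neg_eq_add, neg_neg] at h2
    refine h2.congr_fun fun m => ?_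
    rw [show (-u) ^ (m + 1) = (-1) ^ (m + 1) * u ^ (m + 1) from neg_pow u (m+1)]
    rw [pow_succ]
    ring
  -- the double sum
  set a : ℕ × ℕ → ℝ := fun p =>
    (-1) ^ p.2 * (y ^ 2 / ((p.1 : ℝ) + 1) ^ 2) ^ (p.2 + 1) / ((p.2 : ℝ) + 1) with ha
  have hasum : Summable a := by
    have hd : Summable fun p : ℕ × ℕ =>
        (1 / ((p.1 : ℝ) + 1) ^ 2) * (y ^ 2) ^ (p.2 + 1) := by
      have hgeo : Summable fun m : ℕ => (y ^ 2) ^ m :=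
        summable_geometric_of_lt_one (sq_nonneg y) hysq
      have hgeo2 : Summable fun m : ℕ => (y ^ 2) ^ (m + 1) :=
        ((summable_nat_add_iff 1).mpr hgeo).congr fun m => rfl
      exact Summable.mul_of_nonneg (summable_Z le_rfl) hgeo2
        (fun k => by positivity) (fun m => by positivity)
    refine Summable.of_norm_bounded (g := _) hd fun p => ?_
    obtain ⟨k, m⟩ := p
    have h1 : |a (k, m)| = (y ^ 2 / ((k : ℝ) + 1) ^ 2) ^ (m + 1) / ((m : ℝ) + 1) := by
      rw [ha]
      rw [abs_div, abs_mul, abs_pow, abs_neg, abs_one, one_pow, one_mul,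
        abs_of_nonneg (pow_nonneg (div_nonneg (sq_nonneg y) (hk1 k).le) _),
        abs_of_nonneg (by positivity : (0:ℝ) ≤ (m : ℝ) + 1)]
    rw [Real.norm_eq_abs, h1]
    have hm1 : (1:ℝ) ≤ (m : ℝ) + 1 := by
      have : (0:ℝ) ≤ (m : ℝ) := Nat.cast_nonneg m
      linarith
    have ht1 : (1:ℝ) ≤ ((k : ℝ) + 1) ^ 2 := by
      have : (0:ℝ) ≤ (k : ℝ) := Nat.cast_nonneg k
      nlinarith
    have h2 : (y ^ 2 / ((k : ℝ) + 1) ^ 2) ^ (m + 1)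
        ≤ (1 / ((k : ℝ) + 1) ^ 2) * (y ^ 2) ^ (m + 1) := by
      rw [div_pow, one_div, inv_mul_eq_div]
      exact div_le_div_of_nonneg_left (by positivity) (by positivity)
        (le_self_pow₀ ht1 (Nat.succ_ne_zero m))
    calc (y ^ 2 / ((k : ℝ) + 1) ^ 2) ^ (m + 1) / ((m : ℝ) + 1)
        ≤ (y ^ 2 / ((k : ℝ) + 1) ^ 2) ^ (m + 1) := by
          apply div_le_self (by positivity) hm1
      _ ≤ _ := h2
  have haHasSum : HasSum a (Real.log (Real.sinh (π * y) / (π * y))) := by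
    have h1 := hasum.hasSum
    have h2 := h1.prod_fiberwise fun k => hfiber k
    rwa [h2.unique hgHasSum] at h1
  -- swap the order
  have hswap : HasSum (fun p : ℕ × ℕ => a (p.2, p.1))
      (Real.log (Real.sinh (π * y) / (π * y))) :=
    ((Equiv.prodComm ℕ ℕ).hasSum_iff).mpr haHasSum
  refine hswap.prod_fiberwise fun m => ?_
  -- fiber over m: sum over k
  have hz := (summable_Z (p := 2 * (m + 1)) (by omega)).hasSum
  have h1 := hz.mul_left ((-1) ^ m * y ^ (2 * (m + 1)) / ((m : ℝ) + 1))
  have heq : (fun k : ℕ => (-1) ^ m * y ^ (2 * (m + 1)) / ((m : ℝ) + 1) *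
      (1 / ((k : ℝ) + 1) ^ (2 * (m + 1)))) = fun k : ℕ => a (k, m) := by
    funext k
    have hkne : ((k : ℝ) + 1) ≠ 0 := by positivity
    have hmne : ((m : ℝ) + 1) ≠ 0 := by positivity
    rw [ha]
    simp only
    rw [div_pow, ← pow_mul, ← pow_mul]
    field_simp
  rw [heq] at h1
  have hval : (-1:ℝ) ^ m * Zs (2 * (m + 1)) * y ^ (2 * (m + 1)) / ((m : ℝ) + 1)
      = (-1) ^ m * y ^ (2 * (m + 1)) / ((m : ℝ) + 1) *
        ∑' (b : ℕ), (1:ℝ) / ((b : ℝ) + 1) ^ (2 * (m + 1)) := by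
    rw [Zs]; ring
  rw [hval]
  exact h1

/-- Logarithm of a single factor. -/
lemma log_ratio {t : ℝ} (ht : t ≠ 0) {a b : ℝ} (ha : 0 < a) (hb : 0 < b) :
    Real.log ((1 - Real.exp (a * t)) / (1 - Real.exp (b * t))) =
      (a - b) * t / 2 + (Real.log a - Real.log b)
        + Real.log (Real.sinh (a * t / 2) / (a * t / 2))
        - Real.log (Real.sinh (b * t / 2) / (b * t / 2)) := by
  have hat : a * t / 2 ≠ 0 := by
    simp only [div_ne_zero_iff]; exact ⟨mul_ne_zero ha.ne' ht, two_ne_zero⟩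
  have hbt : b * t / 2 ≠ 0 := by
    simp only [div_ne_zero_iff]; exact ⟨mul_ne_zero hb.ne' ht, two_ne_zero⟩
  have hSa := sinh_div_pos hat
  have hSb := sinh_div_pos hbt
  have hsa : Real.sinh (a * t / 2) ≠ 0 := by
    intro h; rw [h, zero_div] at hSa; exact lt_irrefl _ hSa
  have hsb : Real.sinh (b * t / 2) ≠ 0 := by
    intro h; rw [h, zero_div] at hSb; exact lt_irrefl _ hSb
  have key : (1 - Real.exp (a * t)) / (1 - Real.exp (b * t)) =
      Real.exp ((a - b) * t / 2) * (a / b) *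
        ((Real.sinh (a * t / 2) / (a * t / 2)) / (Real.sinh (b * t / 2) / (b * t / 2))) := by
    rw [one_sub_exp (a * t), one_sub_exp (b * t)]
    rw [show (a - b) * t / 2 = a * t / 2 - b * t / 2 by ring, Real.exp_sub]
    field_simp
  rw [key]
  rw [Real.log_mul (by positivity) (by positivity : (0:ℝ) < _ / _).ne']
  rw [Real.log_mul (Real.exp_ne_zero _) (by positivity : (0:ℝ) < a / b).ne']
  rw [Real.log_exp, Real.log_div ha.ne' hb.ne', Real.log_div hSa.ne' hSb.ne']
  ring

/-- Product of ascending integers as an ascFactorial. -/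
lemma prod_range_asc (m n : ℕ) :
    ∏ j ∈ Finset.range n, (m + 1 + j) = (m + 1).ascFactorial n := by
  induction n with
  | zero => simp
  | succ k ih => rw [Finset.prod_range_succ, ih, Nat.ascFactorial_succ]; ring

lemma prod_range_eq_choose_mul_factorial {M n : ℕ} (h : n ≤ M) :
    ∏ j ∈ Finset.range n, (M - n + j + 1) = Nat.choose M n * Nat.factorial n := by
  have h1 : ∏ j ∈ Finset.range n, (M - n + j + 1) = (M - n + 1).ascFactorial n := by
    rw [← prod_range_asc]
    exact Finset.prod_congr rfl fun j _ => by omega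
  have h2 := Nat.factorial_mul_ascFactorial (M - n) n
  rw [show M - n + n = M by omega] at h2
  have h3 := Nat.choose_mul_factorial_mul_factorial h
  have h4 : (M - n).factorial * ((M - n + 1).ascFactorial n) =
      Nat.choose M n * Nat.factorial n * (M - n).factorial := by rw [h2, ← h3]
  have h5 : 0 < (M - n).factorial := Nat.factorial_pos _
  rw [mul_comm] at h4
  rw [h1]
  exact Nat.eq_of_mul_eq_mul_right h5 h4

/-- `Acoef` as a power sum. -/
lemma Acoef_eq {M n s : ℕ} (hs : 1 ≤ s) (h : n ≤ M) :
    Acoef M n s = ((2 * s + 1 : ℕ) : ℝ) *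
      (∑ j ∈ Finset.range n,
        (((M - n + j + 1 : ℕ) : ℝ) ^ (2 * s) - ((j + 1 : ℕ) : ℝ) ^ (2 * s)))
      / ((M : ℝ) + 1) ^ (2 * s) := by
  have hb : bernoulli (2 * s + 1) = 0 := by
    rw [bernoulli_eq_bernoulli'_of_ne_one (by omega)]
    exact bernoulli'_eq_zero_of_odd ⟨s, by ring⟩ (by omega)
  -- the three aeval's as casts of rational evals
  have cast_eval : ∀ m : ℕ, Polynomial.aeval ((m : ℝ)) (Polynomial.bernoulli (2 * s + 1))
      = ((Polynomial.eval ((m : ℚ)) (Polynomial.bernoulli (2 * s + 1)) : ℚ) : ℝ) := by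
    intro m
    have : ((m : ℝ)) = algebraMap ℚ ℝ ((m : ℚ)) := by
      simp
    rw [this, Polynomial.aeval_algebraMap_apply_eq_algebraMap_eval]
    rfl
  have e1 : ((M : ℝ) + 1) = ((M + 1 : ℕ) : ℝ) := by push_cast; ring
  have e2 : ((M : ℝ) - n + 1) = ((M - n + 1 : ℕ) : ℝ) := by
    push_cast [Nat.cast_sub h]; ring
  have e3 : ((n : ℝ) + 1) = ((n + 1 : ℕ) : ℝ) := by push_cast; ring
  rw [Acoef, e1, e2, e3, cast_eval, cast_eval, cast_eval]
  -- now work in ℚ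
  have key : Polynomial.eval ((M + 1 : ℕ) : ℚ) (Polynomial.bernoulli (2 * s + 1))
      - Polynomial.eval ((M - n + 1 : ℕ) : ℚ) (Polynomial.bernoulli (2 * s + 1))
      - Polynomial.eval ((n + 1 : ℕ) : ℚ) (Polynomial.bernoulli (2 * s + 1))
      = ((2 * s + 1 : ℕ) : ℚ) *
        (∑ j ∈ Finset.range n,
          (((M - n + j + 1 : ℕ) : ℚ) ^ (2 * s) - ((j + 1 : ℕ) : ℚ) ^ (2 * s))) := by
    have hev : ∀ m : ℕ, Polynomial.eval ((m : ℚ)) (Polynomial.bernoulli (2 * s + 1))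
        = bernoulli (2 * s + 1) + ((2 * s : ℕ) + 1 : ℚ) * ∑ k ∈ Finset.range m, (k : ℚ) ^ (2 * s) := by
      intro m
      exact_mod_cast Polynomial.bernoulli_succ_eval m (2 * s)
    rw [hev, hev, hev, hb]
    have split1 : (∑ k ∈ Finset.range (M + 1), (k : ℚ) ^ (2 * s))
        = (∑ k ∈ Finset.range (M - n + 1), (k : ℚ) ^ (2 * s))
          + ∑ j ∈ Finset.range n, ((M - n + j + 1 : ℕ) : ℚ) ^ (2 * s) := by
      rw [show M + 1 = (M - n + 1) + n by omega, Finset.sum_range_add]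
      congr 1
      exact Finset.sum_congr rfl fun j _ => by norm_cast; congr 1; omega
    have split2 : (∑ k ∈ Finset.range (n + 1), (k : ℚ) ^ (2 * s))
        = ∑ j ∈ Finset.range n, ((j + 1 : ℕ) : ℚ) ^ (2 * s) := by
      rw [show n + 1 = 1 + n by omega, Finset.sum_range_add]
      simp only [Finset.range_one, Finset.sum_singleton, Nat.cast_zero]
      rw [zero_pow (by omega), zero_add]
      exact Finset.sum_congr rfl fun j _ => by norm_cast; congr 1; omega
    rw [split1, split2, Finset.sum_sub_distrib]
    push_cast
    ring
  rw [show ((Polynomial.eval ((M+1:ℕ):ℚ) (Polynomial.bernoulli (2*s+1)) : ℚ) : ℝ)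
      - ((Polynomial.eval ((M-n+1:ℕ):ℚ) (Polynomial.bernoulli (2*s+1)) : ℚ) : ℝ)
      - ((Polynomial.eval ((n+1:ℕ):ℚ) (Polynomial.bernoulli (2*s+1)) : ℚ) : ℝ)
      = ((Polynomial.eval ((M+1:ℕ):ℚ) (Polynomial.bernoulli (2*s+1))
        - Polynomial.eval ((M-n+1:ℕ):ℚ) (Polynomial.bernoulli (2*s+1))
        - Polynomial.eval ((n+1:ℕ):ℚ) (Polynomial.bernoulli (2*s+1)) : ℚ) : ℝ) by push_cast; ring]
  rw [key]
  push_cast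
  ring

/-- Key inequality. -/
lemma sum_pow_lt (M s : ℕ) :
    ((2 * s + 1 : ℕ) : ℝ) * (∑ k ∈ Finset.range M, ((k : ℝ) + 1) ^ (2 * s))
      < ((M : ℝ) + 1) ^ (2 * s + 1) := by
  have step : ∀ k : ℕ, ((2 * s + 1 : ℕ) : ℝ) * ((k : ℝ) + 1) ^ (2 * s)
      ≤ (((k + 1 : ℕ) : ℝ) + 1) ^ (2 * s + 1) - (((k : ℕ) : ℝ) + 1) ^ (2 * s + 1) := by
    intro k
    set a : ℝ := (k : ℝ) + 1 with hadef
    have ha : 0 < a := by positivity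
    have hm2 : (-2:ℝ) ≤ 1 / a := by
      have h0 : (0:ℝ) ≤ 1 / a := by positivity
      linarith
    have h := one_add_mul_le_pow hm2 (2 * s + 1)
    have h2 := mul_le_mul_of_nonneg_right h (le_of_lt (pow_pos ha (2 * s + 1)))
    have e : (1 + 1 / a) ^ (2 * s + 1) * a ^ (2 * s + 1) = (a + 1) ^ (2 * s + 1) := by
      rw [← mul_pow]
      congr 1
      field_simp
    rw [e] at h2
    have e2 : (1 + ((2 * s + 1 : ℕ) : ℝ) * (1 / a)) * a ^ (2 * s + 1)
        = a ^ (2 * s + 1) + ((2 * s + 1 : ℕ) : ℝ) * a ^ (2 * s) := by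
      rw [pow_succ]
      field_simp
    rw [e2] at h2
    have : (((k + 1 : ℕ) : ℝ) + 1) = a + 1 := by push_cast; ring
    rw [this]
    linarith
  calc ((2 * s + 1 : ℕ) : ℝ) * (∑ k ∈ Finset.range M, ((k : ℝ) + 1) ^ (2 * s))
      = ∑ k ∈ Finset.range M, ((2 * s + 1 : ℕ) : ℝ) * ((k : ℝ) + 1) ^ (2 * s) := by
        rw [Finset.mul_sum]
    _ ≤ ∑ k ∈ Finset.range M,
        ((((k + 1 : ℕ) : ℝ) + 1) ^ (2 * s + 1) - (((k : ℕ) : ℝ) + 1) ^ (2 * s + 1)) :=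
        Finset.sum_le_sum fun k _ => step k
    _ = ((M : ℝ) + 1) ^ (2 * s + 1) - 1 := by
        rw [Finset.sum_range_sub (fun k => ((k : ℝ) + 1) ^ (2 * s + 1)) M]
        norm_num
    _ < ((M : ℝ) + 1) ^ (2 * s + 1) := by linarith

/-- Taylor expansion of the logarithm of the Gaussian binomial coefficient near
`q = 1`: for `q = e^{2πx/(M+1)}`,
`log [M choose n]_q = log (M choose n) + (π n(M-n)/(M+1)) x
  + Σ_{s≥1} ((-1)^{s+1} ζ(2s) A^{(s)}_{M,n}/(s(2s+1))) x^{2s}`,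
and moreover `0 < A^{(s)}_{M,n} < M+1` for `0 < n < M`. -/
theorem log_qbinom_expansion (M n : ℕ) (hn : 0 < n) (hnM : n < M) :
    (∀ s : ℕ, 1 ≤ s → 0 < Acoef M n s ∧ Acoef M n s < (M : ℝ) + 1) ∧
    (∀ x : ℝ, x ≠ 0 → |x| < 1 →
      Real.log (qbinom M n (Real.exp (2 * π * x / ((M : ℝ) + 1)))) =
        Real.log (Nat.choose M n) + (π * n * (M - n : ℕ) / ((M : ℝ) + 1)) * x +
          ∑' s : ℕ,
            ((-1) ^ s * (∑' k : ℕ, (1 : ℝ) / ((k : ℝ) + 1) ^ (2 * (s + 1))) *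
                Acoef M n (s + 1) / (((s : ℝ) + 1) * (2 * ((s : ℝ) + 1) + 1))) *
              x ^ (2 * (s + 1))) := by
  have hnM' : n ≤ M := hnM.le
  constructor
  · -- bounds on Acoef
    intro s hs
    have hA := Acoef_eq hs hnM'
    have hM1 : (0:ℝ) < (M : ℝ) + 1 := by positivity
    have hterm : ∀ j ∈ Finset.range n,
        (0:ℝ) < ((M - n + j + 1 : ℕ) : ℝ) ^ (2 * s) - ((j + 1 : ℕ) : ℝ) ^ (2 * s) := by
      intro j hj
      have hlt : ((j + 1 : ℕ) : ℝ) < ((M - n + j + 1 : ℕ) : ℝ) := by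
        exact_mod_cast (by omega : j + 1 < M - n + j + 1)
      have h0 : (0:ℝ) ≤ ((j + 1 : ℕ) : ℝ) := by positivity
      have := pow_lt_pow_left₀ hlt h0 (by omega : 2 * s ≠ 0)
      linarith
    have hSpos : (0:ℝ) < ∑ j ∈ Finset.range n,
        (((M - n + j + 1 : ℕ) : ℝ) ^ (2 * s) - ((j + 1 : ℕ) : ℝ) ^ (2 * s)) :=
      Finset.sum_pos hterm (Finset.nonempty_range_iff.mpr hn.ne')
    constructor
    · rw [hA]
      have : (0:ℝ) < ((2 * s + 1 : ℕ) : ℝ) := by positivity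
      exact div_pos (mul_pos this hSpos) (pow_pos hM1 _)
    · rw [hA, div_lt_iff₀ (pow_pos hM1 _)]
      -- S ≤ full sum
      have hdecomp : (∑ k ∈ Finset.range M, ((k : ℝ) + 1) ^ (2 * s))
          = (∑ k ∈ Finset.range (M - n), ((k : ℝ) + 1) ^ (2 * s))
            + ∑ j ∈ Finset.range n, ((M - n + j + 1 : ℕ) : ℝ) ^ (2 * s) := by
        rw [show M = (M - n) + n by omega, Finset.sum_range_add]
        congr 1
        · rw [show (M - n) + n - n = M - n by omega]
        · refine Finset.sum_congr rfl fun j _ => ?_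
          rw [show (M - n) + n - n = M - n by omega]
          norm_cast
      have hS_le : (∑ j ∈ Finset.range n,
            (((M - n + j + 1 : ℕ) : ℝ) ^ (2 * s) - ((j + 1 : ℕ) : ℝ) ^ (2 * s)))
          ≤ ∑ k ∈ Finset.range M, ((k : ℝ) + 1) ^ (2 * s) := by
        rw [Finset.sum_sub_distrib, hdecomp]
        have h1 : (0:ℝ) ≤ ∑ k ∈ Finset.range (M - n), ((k : ℝ) + 1) ^ (2 * s) :=
          Finset.sum_nonneg fun k _ => by positivity
        have h2 : (0:ℝ) ≤ ∑ j ∈ Finset.range n, ((j + 1 : ℕ) : ℝ) ^ (2 * s) :=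
          Finset.sum_nonneg fun j _ => by positivity
        linarith
      have hkey := sum_pow_lt M s
      have hc : (0:ℝ) ≤ ((2 * s + 1 : ℕ) : ℝ) := by positivity
      have := mul_le_mul_of_nonneg_left hS_le hc
      have hpow : ((M : ℝ) + 1) ^ (2 * s + 1) = ((M : ℝ) + 1) * ((M : ℝ) + 1) ^ (2 * s) := by
        rw [pow_succ]; ring
      nlinarith
  · -- the expansion
    intro x hx hx1
    have hM1 : (0:ℝ) < (M : ℝ) + 1 := by positivity
    set T : ℝ := 2 * π * x / ((M : ℝ) + 1) with hTdef
    have hTne : T ≠ 0 := by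
      rw [hTdef]
      exact div_ne_zero (mul_ne_zero (mul_ne_zero two_ne_zero Real.pi_ne_zero) hx) hM1.ne'
    have hone : ∀ c : ℕ, 1 ≤ c → 1 - Real.exp T ^ c ≠ 0 := by
      intro c hc
      rw [← Real.exp_nat_mul]
      intro h
      have h1 : Real.exp ((c : ℝ) * T) = 1 := by linarith
      rw [Real.exp_eq_one_iff] at h1
      have hcne : (c : ℝ) ≠ 0 := Nat.cast_ne_zero.mpr (by omega)
      exact (mul_ne_zero hcne hTne) h1
    have hfac_ne : ∀ j ∈ Finset.range n,
        (1 - Real.exp T ^ (M - n + j + 1)) / (1 - Real.exp T ^ (j + 1)) ≠ 0 := fun j _ =>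
      div_ne_zero (hone _ (by omega)) (hone _ (by omega))
    have hcy : ∀ c : ℕ, c ≤ M → |(c : ℝ) * x / ((M : ℝ) + 1)| < 1 := by
      intro c hc
      rw [abs_div, abs_of_pos hM1, div_lt_one hM1, abs_mul,
        abs_of_nonneg (by positivity : (0:ℝ) ≤ (c : ℝ))]
      have h1 : (c : ℝ) ≤ (M : ℝ) := by exact_mod_cast hc
      have h2 : |x| < 1 := hx1
      have h3 : 0 ≤ |x| := abs_nonneg x
      nlinarith
    have hhalf : ∀ c : ℕ, (c : ℝ) * T / 2 = π * ((c : ℝ) * x / ((M : ℝ) + 1)) := by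
      intro c
      rw [hTdef]
      field_simp
    have hsinh : ∀ c : ℕ, c ≤ M →
        HasSum (fun m : ℕ => (-1) ^ m * Zs (2 * (m + 1)) *
            ((c : ℝ) * x / ((M : ℝ) + 1)) ^ (2 * (m + 1)) / ((m : ℝ) + 1))
          (Real.log (Real.sinh ((c : ℝ) * T / 2) / ((c : ℝ) * T / 2))) := by
      intro c hc
      have h1 := hasSum_log_sinh (hcy c hc)
      rw [hhalf c]
      exact h1
    -- rewrite the log of the product
    rw [qbinom, Real.log_prod hfac_ne]
    have hrw : ∀ j ∈ Finset.range n,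
        Real.log ((1 - Real.exp T ^ (M - n + j + 1)) / (1 - Real.exp T ^ (j + 1)))
        = ((((M - n + j + 1 : ℕ) : ℝ) - ((j + 1 : ℕ) : ℝ)) * T / 2
            + (Real.log ((M - n + j + 1 : ℕ) : ℝ) - Real.log ((j + 1 : ℕ) : ℝ))
            + Real.log (Real.sinh (((M - n + j + 1 : ℕ) : ℝ) * T / 2)
                / (((M - n + j + 1 : ℕ) : ℝ) * T / 2)))
          - Real.log (Real.sinh (((j + 1 : ℕ) : ℝ) * T / 2)
                / (((j + 1 : ℕ) : ℝ) * T / 2)) := by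
      intro j hj
      rw [← Real.exp_nat_mul, ← Real.exp_nat_mul]
      have ha : (0:ℝ) < ((M - n + j + 1 : ℕ) : ℝ) := by
        exact_mod_cast Nat.succ_pos (M - n + j)
      have hb : (0:ℝ) < ((j + 1 : ℕ) : ℝ) := by exact_mod_cast Nat.succ_pos j
      exact log_ratio hTne ha hb
    rw [Finset.sum_congr rfl hrw, Finset.sum_sub_distrib, Finset.sum_add_distrib,
      Finset.sum_add_distrib]
    -- piece 1 : the linear term
    have hp1 : (∑ j ∈ Finset.range n, (((M - n + j + 1 : ℕ) : ℝ) - ((j + 1 : ℕ) : ℝ)) * T / 2)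
        = π * n * ((M - n : ℕ) : ℝ) / ((M : ℝ) + 1) * x := by
      have he : ∀ j ∈ Finset.range n,
          (((M - n + j + 1 : ℕ) : ℝ) - ((j + 1 : ℕ) : ℝ)) * T / 2
          = ((M - n : ℕ) : ℝ) * T / 2 := by
        intro j _
        congr 2
        push_cast [Nat.cast_sub hnM']
        ring
      rw [Finset.sum_congr rfl he, Finset.sum_const, Finset.card_range, nsmul_eq_mul, hTdef]
      field_simp
    -- piece 2 : the log of the binomial coefficient
    have hp2 : (∑ j ∈ Finset.range n,
          (Real.log ((M - n + j + 1 : ℕ) : ℝ) - Real.log ((j + 1 : ℕ) : ℝ)))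
        = Real.log (Nat.choose M n) := by
      rw [Finset.sum_sub_distrib]
      rw [← Real.log_prod (fun j _ => Nat.cast_ne_zero.mpr (Nat.succ_ne_zero (M - n + j))),
        ← Real.log_prod (fun j _ => Nat.cast_ne_zero.mpr (Nat.succ_ne_zero j))]
      rw [← Nat.cast_prod, ← Nat.cast_prod]
      rw [Finset.prod_range_add_one_eq_factorial, prod_range_eq_choose_mul_factorial hnM']
      rw [Nat.cast_mul, Real.log_mul (Nat.cast_ne_zero.mpr (Nat.choose_pos hnM').ne')
        (Nat.cast_ne_zero.mpr (Nat.factorial_pos n).ne')]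
      have h1 : (0:ℝ) < (Nat.factorial n : ℝ) := by
        exact_mod_cast Nat.factorial_pos n
      ring
    -- piece 3 : the series
    have HA : HasSum (fun m : ℕ => ∑ j ∈ Finset.range n,
          ((-1) ^ m * Zs (2 * (m + 1)) *
              (((M - n + j + 1 : ℕ) : ℝ) * x / ((M : ℝ) + 1)) ^ (2 * (m + 1)) / ((m : ℝ) + 1)
            - (-1) ^ m * Zs (2 * (m + 1)) *
              (((j + 1 : ℕ) : ℝ) * x / ((M : ℝ) + 1)) ^ (2 * (m + 1)) / ((m : ℝ) + 1)))
        (∑ j ∈ Finset.range n,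
          (Real.log (Real.sinh (((M - n + j + 1 : ℕ) : ℝ) * T / 2)
              / (((M - n + j + 1 : ℕ) : ℝ) * T / 2))
            - Real.log (Real.sinh (((j + 1 : ℕ) : ℝ) * T / 2)
              / (((j + 1 : ℕ) : ℝ) * T / 2)))) :=
      hasSum_sum fun j hj => by
        have hj' := Finset.mem_range.mp hj
        exact (hsinh _ (by omega)).sub (hsinh _ (by omega))
    have hpt : ∀ m : ℕ, (∑ j ∈ Finset.range n,
          ((-1) ^ m * Zs (2 * (m + 1)) *
              (((M - n + j + 1 : ℕ) : ℝ) * x / ((M : ℝ) + 1)) ^ (2 * (m + 1)) / ((m : ℝ) + 1)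
            - (-1) ^ m * Zs (2 * (m + 1)) *
              (((j + 1 : ℕ) : ℝ) * x / ((M : ℝ) + 1)) ^ (2 * (m + 1)) / ((m : ℝ) + 1)))
        = ((-1) ^ m * Zs (2 * (m + 1)) * Acoef M n (m + 1)
            / (((m : ℝ) + 1) * (2 * ((m : ℝ) + 1) + 1))) * x ^ (2 * (m + 1)) := by
      intro m
      have hA := Acoef_eq (s := m + 1) (by omega) hnM'
      rw [hA]
      set p : ℕ := 2 * (m + 1) with hp
      have hKey : ∀ j ∈ Finset.range n,
          ((-1) ^ m * Zs p * (((M - n + j + 1 : ℕ) : ℝ) * x / ((M : ℝ) + 1)) ^ p / ((m : ℝ) + 1)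
            - (-1) ^ m * Zs p * (((j + 1 : ℕ) : ℝ) * x / ((M : ℝ) + 1)) ^ p / ((m : ℝ) + 1))
          = (((M - n + j + 1 : ℕ) : ℝ) ^ p - ((j + 1 : ℕ) : ℝ) ^ p)
            * ((-1) ^ m * Zs p * x ^ p / (((m : ℝ) + 1) * ((M : ℝ) + 1) ^ p)) := by
        intro j _
        rw [div_pow, div_pow, mul_pow, mul_pow]
        have hMp : ((M : ℝ) + 1) ^ p ≠ 0 := by positivity
        have hmne : ((m : ℝ) + 1) ≠ 0 := by positivity
        field_simp
      rw [Finset.sum_congr rfl hKey, ← Finset.sum_mul]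
      have hc1 : ((2 * (m + 1) + 1 : ℕ) : ℝ) = 2 * ((m : ℝ) + 1) + 1 := by push_cast; ring
      rw [hc1]
      have hMp : ((M : ℝ) + 1) ^ p ≠ 0 := by positivity
      have hmne : ((m : ℝ) + 1) ≠ 0 := by positivity
      have h2m : (2 * ((m : ℝ) + 1) + 1) ≠ 0 := by positivity
      field_simp
    have HB : HasSum (fun m : ℕ => ((-1) ^ m * Zs (2 * (m + 1)) * Acoef M n (m + 1)
            / (((m : ℝ) + 1) * (2 * ((m : ℝ) + 1) + 1))) * x ^ (2 * (m + 1)))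
        (∑ j ∈ Finset.range n,
          (Real.log (Real.sinh (((M - n + j + 1 : ℕ) : ℝ) * T / 2)
              / (((M - n + j + 1 : ℕ) : ℝ) * T / 2))
            - Real.log (Real.sinh (((j + 1 : ℕ) : ℝ) * T / 2)
              / (((j + 1 : ℕ) : ℝ) * T / 2)))) := by
      refine HA.congr_fun fun m => (hpt m).symm
    simp only [Zs] at HB
    rw [HB.tsum_eq, hp1, hp2, Finset.sum_sub_distrib]
    ring
end

section
/- Let A = (a_{ij}) be the 2N×2N matrix h_l^{cl} with s = sech(u) as above, and define h(x) = adj(x·I − A). Then for 1 ≤ k ≤ N, the entries of the first column of the adjugate are given explicitly by (h(x))_{2k−1,1} = (x−1)^{N−k+1} x^{N−k} (s²+x−1)^{k−1} and (h(x))_{2k,1} = −s (x−1)^{N−k} x^{N−k} (s²+x−1)^{k−1}. -/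
/-- The lower-triangular matrix `h_l^{cl}` on `2N` sites (0-based indexing of
the 1-based description): diagonal entries `1` at 1-based even positions,
subdiagonal entries `-s`, second subdiagonal entries `1` starting from
1-based odd columns. -/
def hlcl (N : ℕ) (s : ℝ) : Matrix (Fin (2 * N)) (Fin (2 * N)) ℝ :=
  Matrix.of fun i j =>
    if i = j then (if (i : ℕ) % 2 = 1 then 1 else 0)
    else if (i : ℕ) = (j : ℕ) + 1 then -s
    else if (i : ℕ) = (j : ℕ) + 2 ∧ (j : ℕ) % 2 = 0 then 1
    else 0

/-! Write the candidate column as `v (2m) = (x - 1) P m`, `v (2m + 1) = -s P m` with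
`P m = (x (x - 1)) ^ (N - 1 - m) (s² + x - 1) ^ m`. Then `(x • 1 - A) *ᵥ v = det (x • 1 - A) • e₀`:
row by row this reduces to the recurrence `x (x - 1) P (m + 1) = (s² + x - 1) P m`, and the
determinant of the lower-triangular `x • 1 - A` is `(x (x - 1)) ^ N`. Since `adj M * M = det M • 1`,
this equation pins down the first column of the adjugate whenever `det M ≠ 0`, i.e. for
`x ∉ {0, 1}`; both sides are continuous in `x`, which covers the two remaining points. -/

open Matrix Finset

theorem Finset.prod_range_two_mul_mod_two {M : Type*} [CommMonoid M] (f : ℕ → M) (N : ℕ) :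
    ∏ i ∈ range (2 * N), f (i % 2) = (f 0 * f 1) ^ N := by
  induction N with
  | zero => simp
  | succ N ih =>
    rw [show 2 * (N + 1) = 2 * N + 1 + 1 by ring, prod_range_succ, prod_range_succ, ih,
      Nat.mul_mod_right, Nat.add_mod, Nat.mul_mod_right, pow_succ]
    simp only [Nat.one_mod, zero_add, mul_assoc]

theorem Fin.sum_ite_val_eq_add {M : Type*} [AddCommMonoid M] {n : ℕ} (i : Fin n) (c : ℕ)
    (f : ℕ → M) :
    ∑ j : Fin n, (if (i : ℕ) = j + c then f j else 0) = if c ≤ i then f (i - c) else 0 := by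
  split_ifs with hc
  · rw [sum_eq_single ⟨i - c, by omega⟩ (fun j _ hj => if_neg fun h => hj (by ext; simp; omega))
      (by simp), if_pos (by simp; omega)]
  · exact sum_eq_zero fun j _ => if_neg (by omega)

theorem Matrix.adjugate_apply_eq_of_mulVec_eq {n R : Type*} [Fintype n] [DecidableEq n]
    [CommRing R] [IsDomain R] {M : Matrix n n R} (hM : M.det ≠ 0) {v : n → R} {j : n}
    (hv : M *ᵥ v = M.det • Pi.single j 1) (i : n) : M.adjugate i j = v i := by
  have h : M.det • M.adjugate.col j = M.det • v := by
    rw [← mulVec_single_one, ← mulVec_smul, ← hv, mulVec_mulVec, adjugate_mul, smul_mulVec,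
      one_mulVec]
  exact congrFun (smul_right_injective _ hM h) i

noncomputable def firstColumnWeight (N : ℕ) (s x : ℝ) (m : ℕ) : ℝ :=
  (x * (x - 1)) ^ (N - 1 - m) * (s ^ 2 + x - 1) ^ m

noncomputable def firstColumn (N : ℕ) (s x : ℝ) (n : ℕ) : ℝ :=
  (if n % 2 = 0 then x - 1 else -s) * firstColumnWeight N s x (n / 2)

section

variable {N : ℕ} (s x : ℝ)

theorem smul_one_sub_hlcl_apply (i j : Fin (2 * N)) :
    (x • (1 : Matrix (Fin (2 * N)) (Fin (2 * N)) ℝ) - hlcl N s) i j =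
      (if i = j then x - (if (i : ℕ) % 2 = 1 then 1 else 0) else 0)
      + (if (i : ℕ) = j + 1 then s else 0)
      + (if (i : ℕ) = j + 2 then (if (j : ℕ) % 2 = 0 then -1 else 0) else 0) := by
  have hij : i = j ↔ (i : ℕ) = j := Fin.ext_iff
  simp only [Matrix.sub_apply, Matrix.smul_apply, one_apply, hlcl, of_apply, smul_eq_mul]
  split_ifs <;> simp_all

theorem det_smul_one_sub_hlcl :
    (x • (1 : Matrix (Fin (2 * N)) (Fin (2 * N)) ℝ) - hlcl N s).det = (x * (x - 1)) ^ N := by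
  have hlower : (x • (1 : Matrix (Fin (2 * N)) (Fin (2 * N)) ℝ) - hlcl N s).IsLowerTriangular := by
    intro i j (hij : i < j)
    rw [smul_one_sub_hlcl_apply, if_neg hij.ne, if_neg (by omega), if_neg (by omega)]
    ring
  have hdiag (i : Fin (2 * N)) :
      (x • (1 : Matrix (Fin (2 * N)) (Fin (2 * N)) ℝ) - hlcl N s) i i =
        x - if (i : ℕ) % 2 = 1 then 1 else 0 := by
    rw [smul_one_sub_hlcl_apply]; simp
  simp only [det_of_isLowerTriangular _ hlower, hdiag]
  rw [Fin.prod_univ_eq_prod_range (fun i => x - if i % 2 = 1 then 1 else 0),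
    prod_range_two_mul_mod_two (fun r => x - if r = 1 then 1 else 0)]
  norm_num

theorem smul_one_sub_hlcl_mulVec_apply (w : ℕ → ℝ) (i : Fin (2 * N)) :
    ((x • (1 : Matrix (Fin (2 * N)) (Fin (2 * N)) ℝ) - hlcl N s) *ᵥ fun j => w j) i =
      (x - if (i : ℕ) % 2 = 1 then 1 else 0) * w i + (if 1 ≤ (i : ℕ) then s * w (i - 1) else 0)
      - (if 2 ≤ (i : ℕ) ∧ (i - 2 : ℕ) % 2 = 0 then w (i - 2) else 0) := by
  simp only [mulVec, dotProduct, smul_one_sub_hlcl_apply, add_mul, sum_add_distrib, ite_mul,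
    zero_mul, sum_ite_eq, mem_univ, if_true]
  rw [Fin.sum_ite_val_eq_add i 1 fun j => s * w j,
    Fin.sum_ite_val_eq_add i 2 fun j => if j % 2 = 0 then -1 * w j else 0]
  split_ifs <;> simp_all <;> ring

theorem firstColumn_two_mul (m : ℕ) :
    firstColumn N s x (2 * m) = (x - 1) * firstColumnWeight N s x m := by
  simp [firstColumn]

theorem firstColumn_two_mul_add_one (m : ℕ) :
    firstColumn N s x (2 * m + 1) = -s * firstColumnWeight N s x m := by
  simp [firstColumn, Nat.add_mod, Nat.add_div]

theorem mul_firstColumnWeight_zero (hN : 0 < N) :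
    x * (x - 1) * firstColumnWeight N s x 0 = (x * (x - 1)) ^ N := by
  obtain ⟨N, rfl⟩ := Nat.exists_eq_add_one.mpr hN
  simp [firstColumnWeight, pow_succ]
  ring

theorem mul_firstColumnWeight_succ {m : ℕ} (hm : m + 1 < N) :
    x * (x - 1) * firstColumnWeight N s x (m + 1) = (s ^ 2 + x - 1) * firstColumnWeight N s x m := by
  obtain ⟨a, rfl⟩ : ∃ a, N = m + 2 + a := ⟨N - m - 2, by omega⟩
  simp only [firstColumnWeight, show m + 2 + a - 1 - m = a + 1 by omega,
    show m + 2 + a - 1 - (m + 1) = a by omega]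
  ring

theorem smul_one_sub_hlcl_mulVec_firstColumn (hN : 0 < N) :
    (x • (1 : Matrix (Fin (2 * N)) (Fin (2 * N)) ℝ) - hlcl N s) *ᵥ (fun j => firstColumn N s x j) =
      (x • (1 : Matrix (Fin (2 * N)) (Fin (2 * N)) ℝ) - hlcl N s).det •
        Pi.single ⟨0, by omega⟩ 1 := by
  ext ⟨n, hn⟩
  rw [smul_one_sub_hlcl_mulVec_apply, det_smul_one_sub_hlcl]
  simp only [Pi.smul_apply, Pi.single_apply, Fin.mk.injEq, smul_eq_mul, mul_ite, mul_one, mul_zero]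
  obtain ⟨m, rfl | rfl⟩ := Nat.even_or_odd' n
  · rcases m with _ | m
    · rw [firstColumn_two_mul, ← mul_firstColumnWeight_zero s x hN, if_neg (by omega), if_neg (by omega), if_neg (by omega), if_pos rfl]
      ring
    · have hrow := mul_firstColumnWeight_succ s x (N := N) (m := m) (by omega)
      rw [if_neg (by omega), if_pos (by omega), if_pos (by omega), if_neg (by omega),
        show 2 * (m + 1) - 1 = 2 * m + 1 by omega, show 2 * (m + 1) - 2 = 2 * m by omega,
        firstColumn_two_mul, firstColumn_two_mul, firstColumn_two_mul_add_one]
      linear_combination hrow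
  · rw [if_pos (by omega), if_pos (by omega), if_neg (by omega), if_neg (by omega),
      Nat.add_sub_cancel, firstColumn_two_mul, firstColumn_two_mul_add_one]
    ring

end

theorem adjugate_smul_one_sub_hlcl_apply_zero {N : ℕ} (hN : 0 < N) (s x : ℝ) (i : Fin (2 * N)) :
    (x • (1 : Matrix (Fin (2 * N)) (Fin (2 * N)) ℝ) - hlcl N s).adjugate i ⟨0, by omega⟩ =
      firstColumn N s x i := by
  have hadj : Continuous fun y : ℝ =>
      (y • (1 : Matrix (Fin (2 * N)) (Fin (2 * N)) ℝ) - hlcl N s).adjugate i ⟨0, by omega⟩ :=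
    ((continuous_matrix fun _ _ => by fun_prop).matrix_adjugate).matrix_elem _ _
  have hcol : Continuous fun y : ℝ => firstColumn N s y i := by
    unfold firstColumn firstColumnWeight
    split_ifs <;> fun_prop
  have hdense : Dense ({0, 1}ᶜ : Set ℝ) :=
    Set.Countable.dense_compl ℝ ((Set.toFinite {0, 1}).countable)
  refine congrFun (hadj.ext_on hdense hcol fun y hy => ?_) x
  have hdet : (y • (1 : Matrix (Fin (2 * N)) (Fin (2 * N)) ℝ) - hlcl N s).det ≠ 0 := by
    simp only [Set.mem_compl_iff, Set.mem_insert_iff, Set.mem_singleton_iff, not_or] at hy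
    rw [det_smul_one_sub_hlcl]
    exact pow_ne_zero _ (mul_ne_zero hy.1 (sub_ne_zero.mpr hy.2))
  exact adjugate_apply_eq_of_mulVec_eq hdet (smul_one_sub_hlcl_mulVec_firstColumn s y hN) i

/-- Explicit first-column entries of the adjugate `h(x) = adj(x·I − h_l^{cl})`:
in 1-based indexing, `(h(x))_{2k-1,1} = (x-1)^{N-k+1} x^{N-k} (s²+x-1)^{k-1}`
and `(h(x))_{2k,1} = -s (x-1)^{N-k} x^{N-k} (s²+x-1)^{k-1}`, with `s = sech u`. -/
theorem adjugate_first_column (N : ℕ) (hN : 0 < N) (u : ℝ) (x : ℝ)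
    (k : ℕ) (hk1 : 1 ≤ k) (hkN : k ≤ N) :
    ((x • (1 : Matrix (Fin (2 * N)) (Fin (2 * N)) ℝ) -
          hlcl N (Real.cosh u)⁻¹).adjugate
        ⟨2 * k - 2, by omega⟩ ⟨0, by omega⟩ =
      (x - 1) ^ (N - k + 1) * x ^ (N - k) * ((Real.cosh u)⁻¹ ^ 2 + x - 1) ^ (k - 1)) ∧
    ((x • (1 : Matrix (Fin (2 * N)) (Fin (2 * N)) ℝ) -
          hlcl N (Real.cosh u)⁻¹).adjugate
        ⟨2 * k - 1, by omega⟩ ⟨0, by omega⟩ =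
      -(Real.cosh u)⁻¹ * (x - 1) ^ (N - k) * x ^ (N - k) *
        ((Real.cosh u)⁻¹ ^ 2 + x - 1) ^ (k - 1)) := by
  obtain ⟨m, rfl⟩ : ∃ m, k = m + 1 := ⟨k - 1, by omega⟩
  obtain ⟨a, rfl⟩ : ∃ a, N = m + 1 + a := ⟨N - (m + 1), by omega⟩
  simp only [adjugate_smul_one_sub_hlcl_apply_zero hN, show 2 * (m + 1) - 2 = 2 * m by omega,
    show 2 * (m + 1) - 1 = 2 * m + 1 by omega, firstColumn_two_mul, firstColumn_two_mul_add_one,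
    firstColumnWeight, show m + 1 + a - 1 - m = a by omega, show m + 1 + a - (m + 1) = a by omega,
    Nat.add_sub_cancel, mul_pow]
  constructor <;> ring
end
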